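/- arXiv:2412.03289 — 3 statements merged into one kernel-verified Lean document; each statement's English description precedes it below -/
import Mathlib

section
/- Let m ≥ 3 be an integer and let u = 0^{m−2} 1 0^{m} 1 0^{m+1} 1 0^{m+1} 1 and v = 0^{m} 1 0^{m−2} 1 0^{m+1} 1 0^{m+1} 1, binary words of length n = 4m+4. Then there exists a distinguishing subword for u and v of length 3m+3, and every distinguishing subword for u and v has length at least 3m+3. -/
open List

/-- Two binary words are conjugate (cyclic rotations of each other). -/
def ConjWords (x y : List Bool) : Prop := ∃ s t : List Bool, x = s ++ t ∧ y = t ++ s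

/-- `s` is a cyclic (scattered) subword of `w`: some conjugate of `s` is a
subsequence of some conjugate of `w`. -/
def CyclicSubword (s w : List Bool) : Prop :=
  ∃ s' w' : List Bool, ConjWords s s' ∧ ConjWords w w' ∧ s'.Sublist w'

/-- `w` is a distinguishing subword for `u` and `v`: it is a cyclic subword of
exactly one of them. -/
def Distinguishing (w u v : List Bool) : Prop :=
  Xor' (CyclicSubword w u) (CyclicSubword w v)

/-- Cyclic access to the letters of a word. -/
def cget (w : List Bool) (i : ℕ) : Bool := w.getD (i % w.length) false

/-- The number of blocks of 0's of the cyclic word `w` (equivalently, of blocks of 1's,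
for a word containing both letters): positions carrying a `0` whose cyclic
predecessor carries a `1`. -/
noncomputable def lCount (w : List Bool) : ℕ :=
  {i | i < w.length ∧ cget w i = false ∧ cget w (i + w.length - 1) = true}.ncard

/-- The maximal length of a cyclic run of 0's in `w`. -/
noncomputable def xMax (w : List Bool) : ℕ :=
  sSup {k | ∃ i, ∀ j < k, cget w (i + j) = false}

/-- There is a maximal run (block) of 0's of length exactly `k` starting at position `i`. -/
def IsZeroBlockAt (w : List Bool) (i k : ℕ) : Prop :=
  cget w (i + w.length - 1) = true ∧ (∀ j < k, cget w (i + j) = false) ∧ cget w (i + k) = true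

/-- The maximal length of a block of 0's of length smaller than `xMax w` (0 if none). -/
noncomputable def yMax (w : List Bool) : ℕ :=
  sSup {k | k < xMax w ∧ ∃ i, IsZeroBlockAt w i k}

/-- The number of big blocks (blocks of 0's of maximal length) of `w`. -/
noncomputable def aCount (w : List Bool) : ℕ :=
  {i | i < w.length ∧ IsZeroBlockAt w i (xMax w)}.ncard

/-- `r`-th power of a word. -/
def listPow (z : List Bool) (r : ℕ) : List Bool := (List.replicate r z).flatten

/-- The word `0^t 1^m`. -/
def blk (t m : ℕ) : List Bool := List.replicate t false ++ List.replicate m true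

/-- Special words (of the first, second or third type). -/
def Special (w : List Bool) : Prop :=
  2 ≤ lCount w ∧ ∃ t m : ℕ, 0 < t ∧ 0 < m ∧
    (ConjWords w (listPow (blk t m) (lCount w)) ∨
     ConjWords w (listPow (blk t m) (lCount w - 1) ++ blk t (2 * m)) ∨
     ∃ i : ℕ, i ≤ lCount w - 2 ∧
       ConjWords w (listPow (blk t m) i ++ blk t (2 * m) ++
         listPow (blk t m) (lCount w - i - 2) ++ blk t (2 * m)))

/-- A cyclic word is periodic if it is conjugate to a proper power. -/
def PeriodicWord (w : List Bool) : Prop :=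
  ∃ z : List Bool, ∃ r : ℕ, 2 ≤ r ∧ ConjWords w (listPow z r)

/-- Position `i` lies in a big block of 0's of `w`. -/
def InBigBlock (w : List Bool) (i : ℕ) : Prop :=
  ∃ s < xMax w, ∀ j < xMax w, cget w (i + w.length - s + j) = false

open Classical in
/-- `w_long`: the cyclic subword of `w` consisting of all 1's together with the
0's lying in big blocks. -/
noncomputable def wLong (w : List Bool) : List Bool :=
  (List.range w.length).filterMap (fun i =>
    if cget w i = true ∨ InBigBlock w i then some (cget w i) else none)

/-- Access to letters of a word indexed by `ZMod`. -/
def zget (w : List Bool) (i : ZMod w.length) : Bool := w.getD i.val false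

/-- `f` is an occurrence of `s` in the cyclic word `w`. -/
def IsOccurrence (s w : List Bool) (f : ZMod s.length → ZMod w.length) : Prop :=
  (∀ i, zget w (f i) = zget s i) ∧
  ∃ j : ZMod s.length, ∃ p : ZMod w.length, ∃ t : Fin s.length → ℕ,
    StrictMono t ∧ (∀ i, t i ≤ w.length - 1) ∧
    ∀ i : Fin s.length, f ((i.val : ZMod s.length) + j) = p + (t i : ZMod w.length)

/-- `s` is a unioccurrent subword of `w`: it has exactly one occurrence in `w`. -/
def Unioccurrent (s w : List Bool) : Prop := ∃! f, IsOccurrence s w f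

namespace SubwordAux

/-- `gapword [a₁,…,aₖ] = 0^{a₁} 1 0^{a₂} 1 … 0^{aₖ} 1`. -/
def gapword : List ℕ → List Bool
  | [] => []
  | a :: A => List.replicate a false ++ true :: gapword A

theorem gapword_append (A B : List ℕ) : gapword (A ++ B) = gapword A ++ gapword B := by
  induction A with
  | nil => simp [gapword]
  | cons a A ih => simp [gapword, ih]

theorem gapword_eq_nil {A : List ℕ} (h : gapword A = []) : A = [] := by
  cases A with
  | nil => rfl
  | cons a A => simp [gapword] at h

theorem length_gapword (A : List ℕ) : (gapword A).length = A.sum + A.length := by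
  induction A with
  | nil => simp [gapword]
  | cons a A ih => simp [gapword, ih]; omega

theorem count_true_gapword (A : List ℕ) : (gapword A).count true = A.length := by
  induction A with
  | nil => simp [gapword]
  | cons a A ih => simp [gapword, count_append, count_replicate, count_cons, ih]

def LinFits : List ℕ → List ℕ → Prop
  | [], _ => True
  | _ :: _, [] => False
  | a :: A, b :: B => (a ≤ b ∧ LinFits A B) ∨ LinFits ((a - b) :: A) B
  termination_by A B => B.length + A.length

@[simp] theorem LinFits_nil (B : List ℕ) : LinFits [] B := by
  unfold LinFits; trivial

@[simp] theorem LinFits_cons_nil (a : ℕ) (A : List ℕ) : ¬ LinFits (a :: A) [] := by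
  unfold LinFits; simp

@[simp] theorem LinFits_cons_cons (a b : ℕ) (A B : List ℕ) :
    LinFits (a :: A) (b :: B) ↔ (a ≤ b ∧ LinFits A B) ∨ LinFits ((a - b) :: A) B := by
  rw [LinFits]

theorem linfits_length : ∀ {A B : List ℕ}, LinFits A B → A.length ≤ B.length := by
  intro A B h
  induction B generalizing A with
  | nil =>
    cases A with
    | nil => simp
    | cons a A => exact absurd h (LinFits_cons_nil a A)
  | cons b B ih =>
    cases A with
    | nil => simp
    | cons a A =>
      rcases (LinFits_cons_cons a b A B).1 h with ⟨_, h2⟩ | h2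
      · simpa using ih h2
      · have := ih h2
        simp at this ⊢
        omega

theorem linfits_sublist : ∀ {A B : List ℕ}, LinFits A B → gapword A <+ gapword B := by
  intro A B h
  induction B generalizing A with
  | nil =>
    cases A with
    | nil => exact Sublist.refl _
    | cons a A => exact absurd h (LinFits_cons_nil a A)
  | cons b B ih =>
    cases A with
    | nil => exact nil_sublist _
    | cons a A =>
      rcases (LinFits_cons_cons a b A B).1 h with ⟨hab, h2⟩ | h2
      · exact Sublist.append ((replicate_sublist_replicate _).2 hab) ((ih h2).cons₂ _)
      · have h3 : replicate (a - b) false ++ true :: gapword A <+ gapword B := ih h2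
        have ha : replicate a false = replicate (min a b) false ++ replicate (a - b) false := by
          rw [← replicate_add]; congr 1; omega
        show replicate a false ++ true :: gapword A <+ replicate b false ++ true :: gapword B
        rw [ha, append_assoc]
        exact Sublist.append ((replicate_sublist_replicate _).2 (Nat.min_le_right a b))
          (h3.trans (sublist_cons_self true (gapword B)))

theorem sublist_gap_helper : ∀ (b a : ℕ) (X Y : List Bool),
    (replicate a false ++ true :: X) <+ (replicate b false ++ true :: Y) →
    (a ≤ b ∧ X <+ Y) ∨ (replicate (a - b) false ++ true :: X) <+ Y := by
  intro b
  induction b with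
  | zero =>
    intro a X Y h
    simp only [replicate_zero, nil_append] at h
    cases a with
    | zero =>
      simp only [replicate_zero, nil_append] at h ⊢
      left
      exact ⟨le_refl 0, (cons_sublist_cons).1 h⟩
    | succ a' =>
      rw [replicate_succ, cons_append] at h
      cases h with
      | cons _ h' =>
        right
        simpa [replicate_succ] using h'
  | succ b' ih =>
    intro a X Y h
    rw [replicate_succ (n := b'), cons_append] at h
    cases a with
    | zero =>
      simp only [replicate_zero, nil_append] at h ⊢
      cases h with
      | cons _ h' =>
        rcases ih 0 X Y (by simpa using h') with ⟨_, hXY⟩ | h2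
        · exact Or.inl ⟨Nat.zero_le _, hXY⟩
        · right; simpa using h2
    | succ a' =>
      rw [replicate_succ, cons_append] at h
      cases h with
      | cons_cons _ h' =>
        rcases ih a' X Y h' with ⟨hab, hXY⟩ | h2
        · exact Or.inl ⟨Nat.succ_le_succ hab, hXY⟩
        · right
          have harith : a' + 1 - (b' + 1) = a' - b' := by omega
          rw [harith]; exact h2
      | cons _ h' =>
        rcases ih (a' + 1) X Y (by rw [replicate_succ, cons_append]; exact h') with ⟨hab, hXY⟩ | h2
        · exact Or.inl ⟨by omega, hXY⟩
        · right
          exact Sublist.trans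
            (Sublist.append_right ((replicate_sublist_replicate _).2 (by omega)) _) h2

theorem sublist_linfits : ∀ {A B : List ℕ}, gapword A <+ gapword B → LinFits A B := by
  intro A B h
  induction B generalizing A with
  | nil =>
    have hA := gapword_eq_nil (sublist_nil.1 h)
    subst hA
    simp
  | cons b B ih =>
    cases A with
    | nil => simp
    | cons a A =>
      have h' := sublist_gap_helper b a (gapword A) (gapword B) h
      rw [LinFits_cons_cons]
      rcases h' with ⟨hab, h2⟩ | h2
      · exact Or.inl ⟨hab, ih h2⟩
      · exact Or.inr (ih (show gapword ((a - b) :: A) <+ gapword B from h2))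

end SubwordAux

namespace SubwordAux

theorem exists_gaplist : ∀ w : List Bool, ∃ C : List ℕ,
    w ++ [true] = gapword C ∧ C.length = w.count true + 1 := by
  intro w
  induction w with
  | nil => exact ⟨[0], by simp [gapword], by simp⟩
  | cons x w ih =>
    obtain ⟨C, hC, hlen⟩ := ih
    cases x with
    | true =>
      refine ⟨0 :: C, ?_, ?_⟩
      · show true :: (w ++ [true]) = gapword (0 :: C)
        rw [hC]; simp [gapword]
      · rw [length_cons, hlen]; simp [count_cons]
    | false =>
      cases C with
      | nil => simp [gapword] at hC
      | cons c C' =>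
        refine ⟨(c + 1) :: C', ?_, ?_⟩
        · show false :: (w ++ [true]) = gapword ((c + 1) :: C')
          rw [hC]
          simp [gapword, replicate_succ]
        · rw [length_cons] at hlen ⊢
          rw [hlen]; simp [count_cons]

theorem gapword_prefix_split : ∀ (a : ℕ) (A' : List ℕ) (s' t : List Bool),
    replicate a false ++ true :: gapword A' = (s' ++ [true]) ++ t →
    ∃ s₂, s' ++ [true] = replicate a false ++ true :: s₂ ∧ s₂ ++ t = gapword A' ∧
      (s₂ = [] ∨ ∃ s₃, s₂ = s₃ ++ [true]) := by
  intro a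
  induction a with
  | zero =>
    intro A' s' t h
    cases s' with
    | nil =>
      have h' : gapword A' = t := by simpa using h
      exact ⟨[], by simp, by simp [h'], Or.inl rfl⟩
    | cons x s'' =>
      rw [cons_append, cons_append] at h
      simp only [replicate_zero, nil_append] at h
      injection h with hx hrest
      refine ⟨s'' ++ [true], ?_, ?_, Or.inr ⟨s'', rfl⟩⟩
      · rw [cons_append, ← hx]; simp
      · rw [hrest, append_assoc]
  | succ a ih =>
    intro A' s' t h
    rw [replicate_succ, cons_append] at h
    cases s' with
    | nil => simp at h
    | cons x s'' =>
      rw [cons_append, cons_append] at h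
      injection h with hx hrest
      obtain ⟨s₂, h1, h2, h3⟩ := ih A' s'' t hrest
      refine ⟨s₂, ?_, h2, h3⟩
      rw [cons_append, ← hx, replicate_succ, cons_append, ← h1]

theorem gapword_split : ∀ (A : List ℕ) (s t : List Bool),
    gapword A = s ++ t → (s = [] ∨ ∃ s', s = s' ++ [true]) →
    ∃ i ≤ A.length, s = gapword (A.take i) ∧ t = gapword (A.drop i) := by
  intro A
  induction A with
  | nil =>
    intro s t h hs
    have h0 : s ++ t = [] := by simpa [gapword] using h.symm
    obtain ⟨rfl, rfl⟩ := append_eq_nil_iff.1 h0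
    exact ⟨0, le_refl 0, by simp [gapword], by simp [gapword]⟩
  | cons a A ih =>
    intro s t h hs
    rcases hs with rfl | ⟨s', rfl⟩
    · refine ⟨0, Nat.zero_le _, by simp [gapword], ?_⟩
      simpa using h.symm
    · have h' : replicate a false ++ true :: gapword A = (s' ++ [true]) ++ t := by
        rw [← h]; rfl
      obtain ⟨s₂, h1, h2, h3⟩ := gapword_prefix_split a A s' t h'
      obtain ⟨i, hi, hs₂, ht⟩ := ih s₂ t h2.symm h3
      refine ⟨i + 1, Nat.succ_le_succ hi, ?_, ?_⟩
      · show s' ++ [true] = gapword (a :: A.take i)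
        rw [h1, hs₂]; rfl
      · simpa using ht

theorem conj_refl (x : List Bool) : ConjWords x x := ⟨x, [], by simp, by simp⟩

theorem conj_symm {x y : List Bool} : ConjWords x y → ConjWords y x :=
  fun ⟨s, t, h1, h2⟩ => ⟨t, s, h2, h1⟩

theorem conj_isRotated {x y : List Bool} : ConjWords x y ↔ x ~r y := by
  constructor
  · rintro ⟨s, t, rfl, rfl⟩
    exact isRotated_append
  · rintro ⟨n, rfl⟩
    exact ⟨x.take (n % x.length), x.drop (n % x.length),
      (take_append_drop _ x).symm, rotate_eq_drop_append_take_mod⟩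

theorem conj_trans {x y z : List Bool} (h1 : ConjWords x y) (h2 : ConjWords y z) :
    ConjWords x z :=
  conj_isRotated.2 ((conj_isRotated.1 h1).trans (conj_isRotated.1 h2))

theorem conj_count (a : Bool) {x y : List Bool} (h : ConjWords x y) :
    count a x = count a y := by
  obtain ⟨s, t, rfl, rfl⟩ := h
  simp [count_append]; omega

theorem conj_length {x y : List Bool} (h : ConjWords x y) : x.length = y.length := by
  obtain ⟨s, t, rfl, rfl⟩ := h
  simp; omega

theorem conj_gapword_rot (B : List ℕ) (i : ℕ) :
    ConjWords (gapword B) (gapword (B.drop i ++ B.take i)) :=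
  ⟨gapword (B.take i), gapword (B.drop i),
    by rw [← gapword_append, take_append_drop], gapword_append _ _⟩

theorem gapword_concat : ∀ {A : List ℕ}, A ≠ [] → ∃ z, gapword A = z ++ [true] := by
  intro A
  induction A with
  | nil => intro h; exact absurd rfl h
  | cons a A ih =>
    intro _
    rcases eq_or_ne A [] with rfl | hA
    · exact ⟨replicate a false, by simp [gapword]⟩
    · obtain ⟨z, hz⟩ := ih hA
      exact ⟨replicate a false ++ true :: z, by simp [gapword, hz]⟩

theorem conj_gapword_end (B : List ℕ) (W : List Bool) (h : ConjWords (gapword B) W)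
    (hend : ∃ z, W = z ++ [true]) : ∃ i ≤ B.length, W = gapword (B.drop i ++ B.take i) := by
  obtain ⟨s, t, h1, h2⟩ := h
  by_cases hs : s = []
  · subst hs
    simp only [nil_append, append_nil] at h1 h2
    exact ⟨0, Nat.zero_le _, by simp [h2, ← h1]⟩
  · have hslast : ∃ s', s = s' ++ [true] := by
      obtain ⟨z, hz⟩ := hend
      have hW : W.getLast? = some true := by rw [hz]; exact getLast?_concat
      rw [h2, getLast?_append_of_ne_nil t hs] at hW
      exact getLast?_eq_some_iff.1 hW
    obtain ⟨i, hi, hseq, hteq⟩ := gapword_split B s t h1 (Or.inr hslast)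
    exact ⟨i, hi, by rw [h2, hseq, hteq, gapword_append]⟩

theorem rep_true_inj : ∀ (a a' : ℕ) (X Y : List Bool),
    replicate a false ++ true :: X = replicate a' false ++ true :: Y → a = a' ∧ X = Y := by
  intro a
  induction a with
  | zero =>
    intro a' X Y h
    cases a' with
    | zero => simpa using h
    | succ a'' => rw [replicate_succ] at h; simp at h
  | succ a'' ih =>
    intro a' X Y h
    cases a' with
    | zero => rw [replicate_succ] at h; simp at h
    | succ a''' =>
      rw [replicate_succ, replicate_succ, cons_append, cons_append] at h
      obtain ⟨h1, h2⟩ := ih a''' X Y (by injection h)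
      exact ⟨by omega, h2⟩

theorem gapword_inj : ∀ {A B : List ℕ}, gapword A = gapword B → A = B := by
  intro A
  induction A with
  | nil =>
    intro B h
    exact (gapword_eq_nil (h.symm)).symm
  | cons a A ih =>
    intro B h
    cases B with
    | nil => simp [gapword] at h
    | cons b B =>
      obtain ⟨h1, h2⟩ := rep_true_inj a b (gapword A) (gapword B) h
      rw [h1, ih h2]

theorem cyc_of {w : List Bool} {C B : List ℕ} (i : ℕ) (hconj : ConjWords w (gapword C))
    (hfit : LinFits C (B.drop i ++ B.take i)) : CyclicSubword w (gapword B) :=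
  ⟨gapword C, gapword (B.drop i ++ B.take i), hconj, conj_gapword_rot B i, linfits_sublist hfit⟩

theorem cyc_to {w : List Bool} {B : List ℕ} (hw : true ∈ w) (h : CyclicSubword w (gapword B)) :
    ∃ C, ∃ i ≤ B.length, ConjWords w (gapword C) ∧ LinFits C (B.drop i ++ B.take i) := by
  obtain ⟨s', w', hws, hww, hsub⟩ := h
  have hts' : true ∈ s' := by
    have hc := conj_count true hws
    have : 0 < count true s' := by rw [← hc]; exact count_pos_iff.2 hw
    exact count_pos_iff.1 this
  obtain ⟨x, y, rfl⟩ := append_of_mem hts'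
  have hsub' : (x ++ [true]) ++ y <+ w' := by simpa [append_assoc] using hsub
  obtain ⟨r₁, r₂, hr, hx1, hy1⟩ := append_sublist_iff.1 hsub'
  have hsub2 : (y ++ x) ++ [true] <+ r₂ ++ r₁ := by
    have : y ++ (x ++ [true]) <+ r₂ ++ r₁ := Sublist.append hy1 hx1
    simpa [append_assoc] using this
  obtain ⟨q₁, q₂, hq, hyx, htr⟩ := append_sublist_iff.1 hsub2
  have htq : true ∈ q₂ := htr.subset (by simp)
  obtain ⟨e, f, rfl⟩ := append_of_mem htq
  have hfin : (y ++ x) ++ [true] <+ (q₁ ++ e) ++ [true] :=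
    Sublist.append (hyx.trans (sublist_append_left q₁ e)) (Sublist.refl _)
  set W₃ : List Bool := f ++ ((q₁ ++ e) ++ [true]) with hW₃
  have hconjW : ConjWords w' W₃ := by
    refine conj_trans (⟨r₁, r₂, hr, rfl⟩ : ConjWords w' (r₂ ++ r₁)) ?_
    exact ⟨(q₁ ++ e) ++ [true], f, by rw [hq]; simp [append_assoc], rfl⟩
  have hsubW : (y ++ x) ++ [true] <+ W₃ := hfin.trans (sublist_append_right f _)
  obtain ⟨C, hC, _⟩ := exists_gaplist (y ++ x)
  have hconjwC : ConjWords w (gapword C) := by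
    rw [← hC]
    refine conj_trans hws ?_
    exact ⟨x ++ [true], y, by simp [append_assoc], by simp [append_assoc]⟩
  have hconjB : ConjWords (gapword B) W₃ := conj_trans hww hconjW
  obtain ⟨i, hi, hWeq⟩ := conj_gapword_end B W₃ hconjB ⟨f ++ (q₁ ++ e), by simp [hW₃, append_assoc]⟩
  refine ⟨C, i, hi, hconjwC, sublist_linfits ?_⟩
  rw [← hC, ← hWeq]
  exact hsubW

end SubwordAux

namespace SubwordAux

theorem conj_gapword_gapword {A A' : List ℕ} (h : ConjWords (gapword A) (gapword A')) :
    ∃ j ≤ A.length, A' = A.drop j ++ A.take j := by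
  rcases eq_or_ne A' [] with rfl | hA'
  · obtain ⟨s, t, h1, h2⟩ := h
    have hts : t = [] ∧ s = [] := by
      have : t ++ s = [] := by simpa [gapword] using h2.symm
      exact append_eq_nil_iff.1 this
    have hA : A = [] := gapword_eq_nil (by rw [h1, hts.1, hts.2]; simp)
    exact ⟨0, by simp, by simp [hA]⟩
  · obtain ⟨i, hi, heq⟩ := conj_gapword_end A (gapword A') h (gapword_concat hA')
    exact ⟨i, hi, gapword_inj heq⟩

theorem rot_forall (b1 b2 b3 b4 : ℕ) {C : List ℕ} {i : ℕ} (hi : i ≤ 4)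
    (h : LinFits C (([b1, b2, b3, b4] : List ℕ).drop i ++ ([b1, b2, b3, b4] : List ℕ).take i)) :
    LinFits C [b1, b2, b3, b4] ∨ LinFits C [b2, b3, b4, b1] ∨
    LinFits C [b3, b4, b1, b2] ∨ LinFits C [b4, b1, b2, b3] := by
  interval_cases i
  · left; simpa using h
  · right; left; simpa using h
  · right; right; left; simpa using h
  · right; right; right; simpa using h
  · left; simpa using h

theorem rot_exists (b1 b2 b3 b4 : ℕ) {C : List ℕ}
    (h : LinFits C [b1, b2, b3, b4] ∨ LinFits C [b2, b3, b4, b1] ∨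
         LinFits C [b3, b4, b1, b2] ∨ LinFits C [b4, b1, b2, b3]) :
    ∃ j ≤ ([b1, b2, b3, b4] : List ℕ).length,
      LinFits C (([b1, b2, b3, b4] : List ℕ).drop j ++ ([b1, b2, b3, b4] : List ℕ).take j) := by
  rcases h with h | h | h | h
  · exact ⟨0, by simp, by simpa using h⟩
  · exact ⟨1, by simp, by simpa using h⟩
  · exact ⟨2, by simp, by simpa using h⟩
  · exact ⟨3, by simp, by simpa using h⟩

theorem core_uv {n : ℕ} {C : List ℕ} (hne : C ≠ [])
    (hsum : C.sum + C.length ≤ 3 * n + 11)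
    (h : LinFits C [n+1, n+3, n+4, n+4] ∨ LinFits C [n+3, n+4, n+4, n+1] ∨
         LinFits C [n+4, n+4, n+1, n+3] ∨ LinFits C [n+4, n+1, n+3, n+4]) :
    LinFits C [n+3, n+1, n+4, n+4] ∨ LinFits C [n+1, n+4, n+4, n+3] ∨
    LinFits C [n+4, n+4, n+3, n+1] ∨ LinFits C [n+4, n+3, n+1, n+4] := by
  have hlen : C.length ≤ 4 := by rcases h with h | h | h | h <;> simpa using linfits_length h
  rcases C with _ | ⟨c1, _ | ⟨c2, _ | ⟨c3, _ | ⟨c4, _ | ⟨c5, C⟩⟩⟩⟩⟩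
  · exact absurd rfl hne
  · simp only [List.sum_cons, List.sum_nil, List.length_cons, List.length_nil] at hsum
    simp only [LinFits_cons_cons, LinFits_cons_nil, LinFits_nil, and_true, and_false, false_and,
      or_false, false_or, true_and, tsub_le_iff_right] at h ⊢
    omega
  · simp only [List.sum_cons, List.sum_nil, List.length_cons, List.length_nil] at hsum
    simp only [LinFits_cons_cons, LinFits_cons_nil, LinFits_nil, and_true, and_false, false_and,
      or_false, false_or, true_and, tsub_le_iff_right] at h ⊢
    omega
  · simp only [List.sum_cons, List.sum_nil, List.length_cons, List.length_nil] at hsum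
    simp only [LinFits_cons_cons, LinFits_cons_nil, LinFits_nil, and_true, and_false, false_and,
      or_false, false_or, true_and, tsub_le_iff_right] at h ⊢
    omega
  · simp only [List.sum_cons, List.sum_nil, List.length_cons, List.length_nil] at hsum
    simp only [LinFits_cons_cons, LinFits_cons_nil, LinFits_nil, and_true, and_false, false_and,
      or_false, false_or, true_and, tsub_le_iff_right] at h ⊢
    omega
  · simp only [List.length_cons] at hlen; omega

theorem core_vu {n : ℕ} {C : List ℕ} (hne : C ≠ [])
    (hsum : C.sum + C.length ≤ 3 * n + 11)
    (h : LinFits C [n+3, n+1, n+4, n+4] ∨ LinFits C [n+1, n+4, n+4, n+3] ∨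
         LinFits C [n+4, n+4, n+3, n+1] ∨ LinFits C [n+4, n+3, n+1, n+4]) :
    LinFits C [n+1, n+3, n+4, n+4] ∨ LinFits C [n+3, n+4, n+4, n+1] ∨
    LinFits C [n+4, n+4, n+1, n+3] ∨ LinFits C [n+4, n+1, n+3, n+4] := by
  have hlen : C.length ≤ 4 := by rcases h with h | h | h | h <;> simpa using linfits_length h
  rcases C with _ | ⟨c1, _ | ⟨c2, _ | ⟨c3, _ | ⟨c4, _ | ⟨c5, C⟩⟩⟩⟩⟩
  · exact absurd rfl hne
  · simp only [List.sum_cons, List.sum_nil, List.length_cons, List.length_nil] at hsum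
    simp only [LinFits_cons_cons, LinFits_cons_nil, LinFits_nil, and_true, and_false, false_and,
      or_false, false_or, true_and, tsub_le_iff_right] at h ⊢
    omega
  · simp only [List.sum_cons, List.sum_nil, List.length_cons, List.length_nil] at hsum
    simp only [LinFits_cons_cons, LinFits_cons_nil, LinFits_nil, and_true, and_false, false_and,
      or_false, false_or, true_and, tsub_le_iff_right] at h ⊢
    omega
  · simp only [List.sum_cons, List.sum_nil, List.length_cons, List.length_nil] at hsum
    simp only [LinFits_cons_cons, LinFits_cons_nil, LinFits_nil, and_true, and_false, false_and,
      or_false, false_or, true_and, tsub_le_iff_right] at h ⊢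
    omega
  · simp only [List.sum_cons, List.sum_nil, List.length_cons, List.length_nil] at hsum
    simp only [LinFits_cons_cons, LinFits_cons_nil, LinFits_nil, and_true, and_false, false_and,
      or_false, false_or, true_and, tsub_le_iff_right] at h ⊢
    omega
  · simp only [List.length_cons] at hlen; omega

end SubwordAux

namespace SubwordAux

theorem count_false_word (m : ℕ) :
    count false (List.replicate (m-2) false ++ [true] ++ List.replicate m false ++ [true] ++
      List.replicate (m+1) false ++ [true] ++ List.replicate (m+1) false ++ [true])
      = (m-2) + m + (m+1) + (m+1) := by
  simp [count_append, count_replicate]; omega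

theorem count_false_word' (m k : ℕ) :
    count false (List.replicate m false ++ [true] ++ List.replicate k false ++ [true] ++
      List.replicate (m+1) false ++ [true] ++ List.replicate (m+1) false ++ [true])
      = m + k + (m+1) + (m+1) := by
  simp [count_append, count_replicate]; omega

end SubwordAux


open SubwordAux in
theorem statement2 (m : ℕ) (hm : 3 ≤ m) (u v : List Bool)
    (hu : u = List.replicate (m-2) false ++ [true] ++
              List.replicate (m) false ++ [true] ++
              List.replicate (m+1) false ++ [true] ++
              List.replicate (m+1) false ++ [true])
    (hv : v = List.replicate (m) false ++ [true] ++
              List.replicate (m-2) false ++ [true] ++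
              List.replicate (m+1) false ++ [true] ++
              List.replicate (m+1) false ++ [true]) :
    (∃ w : List Bool, w.length = 3 * m + 3 ∧ Distinguishing w u v) ∧
    ∀ w : List Bool, Distinguishing w u v → 3 * m + 3 ≤ w.length := by
  obtain ⟨n, rfl⟩ : ∃ n, m = n + 3 := ⟨m - 3, by omega⟩
  have huG : u = gapword [n+1, n+3, n+4, n+4] := by
    rw [hu]
    have h2 : n + 3 - 2 = n + 1 := rfl
    rw [h2]; simp [gapword]
  have hvG : v = gapword [n+3, n+1, n+4, n+4] := by
    rw [hv]
    have h2 : n + 3 - 2 = n + 1 := rfl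
    rw [h2]; simp [gapword]
  constructor
  · refine ⟨gapword [n+4, 0, n+2, n+2], ?_, ?_⟩
    · rw [length_gapword]; simp; omega
    · refine Or.inl ⟨?_, ?_⟩
      · -- CyclicSubword w₀ u
        rw [huG]
        refine cyc_of (C := [0, n+2, n+2, n+4]) 0 ?_ ?_
        · exact ⟨gapword [(n+4 : ℕ)], gapword [0, n+2, n+2],
            by rw [← gapword_append]; rfl, by rw [← gapword_append]; rfl⟩
        · simp only [drop_zero, take_zero, append_nil]
          simp only [LinFits_cons_cons, LinFits_cons_nil, LinFits_nil, and_true, and_false,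
            false_and, or_false, false_or, true_and, tsub_le_iff_right]
          omega
      · -- ¬ CyclicSubword w₀ v
        rw [hvG]
        intro hcv
        have hw0 : true ∈ gapword [n+4, 0, n+2, n+2] := by simp [gapword]
        obtain ⟨C, i, hi, hconj, hfit⟩ := cyc_to hw0 hcv
        have hi' : i ≤ 4 := by simpa using hi
        obtain ⟨j, hj, hCeq⟩ := conj_gapword_gapword hconj
        have hj' : j ≤ 4 := by simpa using hj
        subst hCeq
        clear hi hj
        interval_cases j <;> interval_cases i <;>
          simp only [List.drop_succ_cons, List.drop_zero, List.take_succ_cons, List.take_zero,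
            List.drop_nil, List.take_nil, List.nil_append, List.append_nil, List.cons_append,
            LinFits_cons_cons, LinFits_cons_nil, LinFits_nil, and_true, and_false, false_and,
            or_false, false_or, true_and, tsub_le_iff_right] at hfit <;>
          omega
  · intro w hD
    by_contra hlen
    push_neg at hlen
    have hiff : CyclicSubword w u ↔ CyclicSubword w v := by
      by_cases hw : true ∈ w
      · constructor
        · intro h
          rw [huG] at h
          obtain ⟨C, i, hi, hconj, hfit⟩ := cyc_to hw h
          have hi' : i ≤ 4 := by simpa using hi
          have hne : C ≠ [] := by
            rintro rfl
            have hc := conj_count true hconj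
            simp [gapword] at hc
            exact absurd (count_pos_iff.2 hw) (by omega)
          have hsum : C.sum + C.length ≤ 3 * n + 11 := by
            have hl := conj_length hconj
            rw [length_gapword] at hl
            omega
          have h4 := rot_forall _ _ _ _ hi' hfit
          have h5 := core_uv hne hsum h4
          obtain ⟨j, hj, hfit'⟩ := rot_exists (n+3) (n+1) (n+4) (n+4) h5
          rw [hvG]
          exact cyc_of j hconj hfit'
        · intro h
          rw [hvG] at h
          obtain ⟨C, i, hi, hconj, hfit⟩ := cyc_to hw h
          have hi' : i ≤ 4 := by simpa using hi
          have hne : C ≠ [] := by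
            rintro rfl
            have hc := conj_count true hconj
            simp [gapword] at hc
            exact absurd (count_pos_iff.2 hw) (by omega)
          have hsum : C.sum + C.length ≤ 3 * n + 11 := by
            have hl := conj_length hconj
            rw [length_gapword] at hl
            omega
          have h4 := rot_forall _ _ _ _ hi' hfit
          have h5 := core_vu hne hsum h4
          obtain ⟨j, hj, hfit'⟩ := rot_exists (n+1) (n+3) (n+4) (n+4) h5
          rw [huG]
          exact cyc_of j hconj hfit'
      · have hrep : w = List.replicate w.length false := by
          rw [List.eq_replicate_length]
          intro b hb
          cases b
          · rfl
          · exact absurd hb hw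
        have hcu : CyclicSubword w u := by
          refine ⟨w, u, conj_refl w, conj_refl u, ?_⟩
          rw [hrep]
          apply List.replicate_sublist_iff.2
          rw [hu, count_false_word]
          omega
        have hcv : CyclicSubword w v := by
          refine ⟨w, v, conj_refl w, conj_refl v, ?_⟩
          rw [hrep]
          apply List.replicate_sublist_iff.2
          rw [hv, count_false_word']
          omega
        exact iff_of_true hcu hcv
    rcases hD with ⟨h1, h2⟩ | ⟨h1, h2⟩
    · exact h2 (hiff.1 h1)
    · exact h2 (hiff.2 h1)
end

section
/- Let n be a positive integer and let u and v be binary words of length n, each containing at least one 0 and at least one 1. If every word of length at most 3n/4 + 4 is a cyclic subword of u if and only if it is a cyclic subword of v, then n_{0,u} = n_{0,v}, n_{1,u} = n_{1,v}, and l_u = l_v. -/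
open List

section AuxProof

-- Section A : rotations / conjugacy
lemma conj_iff {x y : List Bool} : ConjWords x y ↔ x ~r y := by
  constructor
  · rintro ⟨s, t, rfl, rfl⟩
    exact ⟨s.length, by simp [List.rotate_append_length_eq]⟩
  · rintro ⟨m, rfl⟩
    rcases x with _ | ⟨a, x⟩
    · exact ⟨[], [], by simp, by simp⟩
    refine ⟨(a::x).take (m % (a::x).length), (a::x).drop (m % (a::x).length),
      ((a::x).take_append_drop _).symm, ?_⟩
    rw [← List.rotate_mod]
    exact List.rotate_eq_drop_append_take (Nat.mod_lt _ (by simp)).le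

lemma conj_refl (x : List Bool) : ConjWords x x := conj_iff.2 (IsRotated.refl x)
lemma conj_symm {x y : List Bool} (h : ConjWords x y) : ConjWords y x :=
  conj_iff.2 (conj_iff.1 h).symm
lemma conj_trans {x y z : List Bool} (h : ConjWords x y) (h' : ConjWords y z) :
    ConjWords x z := conj_iff.2 ((conj_iff.1 h).trans (conj_iff.1 h'))

lemma cyclicSubword_iff {s w : List Bool} :
    CyclicSubword s w ↔ ∃ s' w', s ~r s' ∧ w ~r w' ∧ s'.Sublist w' := by
  unfold CyclicSubword
  simp only [conj_iff]

lemma cyclicSubword_of_sublist {s w : List Bool} (h : s.Sublist w) : CyclicSubword s w :=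
  ⟨s, w, conj_refl s, conj_refl w, h⟩

lemma cyclicSubword_congr {s s' w w' : List Bool} (hs : s ~r s') (hw : w ~r w') :
    CyclicSubword s w ↔ CyclicSubword s' w' := by
  constructor
  · rintro ⟨a, b, h1, h2, h3⟩
    exact ⟨a, b, conj_iff.2 (hs.symm.trans (conj_iff.1 h1)),
      conj_iff.2 (hw.symm.trans (conj_iff.1 h2)), h3⟩
  · rintro ⟨a, b, h1, h2, h3⟩
    exact ⟨a, b, conj_iff.2 (hs.trans (conj_iff.1 h1)),
      conj_iff.2 (hw.trans (conj_iff.1 h2)), h3⟩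

-- Section B : descents
def desc : List Bool → ℕ
  | [] => 0
  | a :: l => (if a = true ∧ l.head? = some false then 1 else 0) + desc l

def wrapv (z : List Bool) : ℕ :=
  if z.getLast? = some true ∧ z.head? = some false then 1 else 0

def cycdesc (z : List Bool) : ℕ := desc z + wrapv z

@[simp] lemma desc_nil : desc [] = 0 := rfl
lemma desc_cons (a : Bool) (l : List Bool) :
    desc (a :: l) = (if a = true ∧ l.head? = some false then 1 else 0) + desc l := rfl

lemma desc_append_singleton (l : List Bool) (a : Bool) :
    desc (l ++ [a]) = desc l + (if l.getLast? = some true ∧ a = false then 1 else 0) := by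
  induction l with
  | nil => simp [desc]
  | cons b t ih =>
    rcases t with _ | ⟨c, t'⟩
    · cases a <;> cases b <;> simp [desc]
    · rw [List.cons_append, desc_cons, desc_cons, ih, List.getLast?_cons_cons]
      simp only [List.cons_append, List.head?_cons, Option.some.injEq]
      omega

lemma cycdesc_nil : cycdesc [] = 0 := rfl

lemma cycdesc_cons_eq_append (a : Bool) (l : List Bool) :
    cycdesc (a :: l) = cycdesc (l ++ [a]) := by
  rcases l with _ | ⟨b, t⟩
  · rfl
  · obtain ⟨c, hc⟩ : ∃ c, (b :: t).getLast? = some c := ⟨_, List.getLast?_eq_getLast (by simp)⟩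
    unfold cycdesc wrapv
    rw [desc_cons, desc_append_singleton, hc, List.getLast?_cons_cons, hc]
    have h1 : ((b :: t) ++ [a]).head? = some b := rfl
    have h2 : ((b :: t) ++ [a]).getLast? = some a := by
      rw [List.getLast?_append] <;> simp
    rw [h1, h2]
    simp only [List.head?_cons]
    rcases a with _|_ <;> rcases b with _|_ <;> rcases c with _|_ <;> simp <;> omega

-- Section B2 : rotation invariance and sublist bounds
lemma cycdesc_append_comm (s t : List Bool) : cycdesc (s ++ t) = cycdesc (t ++ s) := by
  induction s generalizing t with
  | nil => simp
  | cons a s ih =>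
    rw [List.cons_append, cycdesc_cons_eq_append, List.append_assoc, ih, List.append_assoc]
    rfl

lemma cycdesc_rotated {x y : List Bool} (h : x ~r y) : cycdesc x = cycdesc y := by
  obtain ⟨s, t, rfl, rfl⟩ := conj_iff.2 h
  exact cycdesc_append_comm s t

lemma cycdesc_cons_bounds (a : Bool) (l : List Bool) :
    cycdesc l ≤ cycdesc (a :: l) ∧ cycdesc (a :: l) ≤ cycdesc l + 1 := by
  rcases l with _ | ⟨b, t⟩
  · unfold cycdesc wrapv desc
    cases a <;> simp
  · obtain ⟨c, hc⟩ : ∃ c, (b :: t).getLast? = some c := ⟨_, List.getLast?_eq_getLast (by simp)⟩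
    unfold cycdesc wrapv
    simp only [desc_cons, List.getLast?_cons_cons, hc, List.head?_cons]
    rcases a with _|_ <;> rcases b with _|_ <;> rcases c with _|_ <;> simp <;> omega

lemma cycdesc_sublist_aux {l₁ l₂ : List Bool} (h : l₁.Sublist l₂) : ∀ p : List Bool,
    cycdesc (l₁ ++ p) ≤ cycdesc (l₂ ++ p) ∧
    cycdesc (l₂ ++ p) + l₁.length ≤ cycdesc (l₁ ++ p) + l₂.length := by
  induction h with
  | slnil => intro p; omega
  | @cons m₁ m₂ a h ih =>
    intro p
    obtain ⟨h1, h2⟩ := ih p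
    have hb := cycdesc_cons_bounds a (m₂ ++ p)
    rw [List.cons_append]
    constructor
    · exact h1.trans hb.1
    · simp only [List.length_cons]
      omega
  | @cons_cons m₁ m₂ a h ih =>
    intro p
    obtain ⟨h1, h2⟩ := ih (p ++ [a])
    rw [List.cons_append, List.cons_append, cycdesc_cons_eq_append,
      cycdesc_cons_eq_append (l := m₂ ++ p), List.append_assoc, List.append_assoc]
    simp only [List.length_cons]
    omega

lemma cycdesc_sublist_le {l₁ l₂ : List Bool} (h : l₁.Sublist l₂) :
    cycdesc l₁ ≤ cycdesc l₂ := by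
  have := (cycdesc_sublist_aux h []).1
  simpa using this

lemma cycdesc_sublist_len {l₁ l₂ : List Bool} (h : l₁.Sublist l₂) :
    cycdesc l₂ + l₁.length ≤ cycdesc l₁ + l₂.length := by
  have := (cycdesc_sublist_aux h []).2
  simpa using this

-- Section C : block words
def bw : List (ℕ × ℕ) → List Bool
  | [] => []
  | (x, y) :: t => List.replicate x false ++ List.replicate y true ++ bw t

def bwT : List (ℕ × ℕ) → List Bool
  | [] => []
  | (x, y) :: t => List.replicate x true ++ List.replicate y false ++ bwT t

def PosL (bs : List (ℕ × ℕ)) : Prop := ∀ p ∈ bs, 0 < p.1 ∧ 0 < p.2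

lemma posL_cons {x y : ℕ} {t : List (ℕ × ℕ)} (h : PosL ((x, y) :: t)) :
    0 < x ∧ 0 < y ∧ PosL t :=
  ⟨(h _ List.mem_cons_self).1, (h _ List.mem_cons_self).2,
    fun p hp => h p (List.mem_cons_of_mem _ hp)⟩

lemma length_bw (bs : List (ℕ × ℕ)) :
    (bw bs).length = (bs.map fun p => p.1 + p.2).sum := by
  induction bs with
  | nil => rfl
  | cons p t ih => rcases p with ⟨x, y⟩; simp [bw, ih]; omega

lemma count_bw_false (bs : List (ℕ × ℕ)) :
    (bw bs).count false = (bs.map Prod.fst).sum := by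
  induction bs with
  | nil => rfl
  | cons p t ih =>
    rcases p with ⟨x, y⟩
    simp [bw, List.count_append, ih, List.count_replicate]

lemma count_bw_true (bs : List (ℕ × ℕ)) :
    (bw bs).count true = (bs.map Prod.snd).sum := by
  induction bs with
  | nil => rfl
  | cons p t ih =>
    rcases p with ⟨x, y⟩
    simp [bw, List.count_append, ih, List.count_replicate]

lemma desc_replicate_false_append (x : ℕ) (L : List Bool) :
    desc (List.replicate x false ++ L) = desc L := by
  induction x with
  | zero => rfl
  | succ k ih =>
    rw [List.replicate_succ, List.cons_append, desc_cons, ih]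
    simp

lemma head?_replicate_succ (k : ℕ) (a : Bool) :
    (List.replicate (k + 1) a).head? = some a := by
  rw [List.replicate_succ]; rfl

lemma getLast?_replicate_succ (k : ℕ) (a : Bool) :
    (List.replicate (k + 1) a).getLast? = some a := by
  induction k with
  | zero => rfl
  | succ m ih =>
    rw [List.replicate_succ, List.getLast?_cons, ih]
    simp

lemma desc_replicate_true_append (y : ℕ) (L : List Bool) (hy : 0 < y) :
    desc (List.replicate y true ++ L) = desc L +
      (if L.head? = some false then 1 else 0) := by
  induction y with
  | zero => omega
  | succ k ih =>
    rcases Nat.eq_zero_or_pos k with hk | hk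
    · subst hk
      rw [show (List.replicate 1 true ++ L) = true :: L from rfl, desc_cons]
      simp only [true_and]
      omega
    · rw [List.replicate_succ, List.cons_append, desc_cons, ih hk]
      have h2 : (List.replicate k true ++ L).head? = some true := by
        rcases k with _ | k'; · omega
        rw [show List.replicate (k'+1) true ++ L = true :: (List.replicate k' true ++ L) by
          rw [List.replicate_succ, List.cons_append]]
        rfl
      rw [h2]
      simp

lemma head?_bw {x y : ℕ} {t : List (ℕ × ℕ)} (hx : 0 < x) :
    (bw ((x, y) :: t)).head? = some false := by
  rcases x with _ | x'; · omega
  rfl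

lemma bw_ne_nil {bs : List (ℕ × ℕ)} (hp : PosL bs) (hne : bs ≠ []) : bw bs ≠ [] := by
  rcases bs with _ | ⟨⟨x, y⟩, t⟩; · simp at hne
  obtain ⟨hx, hy, _⟩ := posL_cons hp
  rcases x with _ | x'; · omega
  simp [bw, List.replicate_succ]

lemma getLast?_bw {bs : List (ℕ × ℕ)} (hp : PosL bs) (hne : bs ≠ []) :
    (bw bs).getLast? = some true := by
  induction bs with
  | nil => simp at hne
  | cons p t ih =>
    rcases p with ⟨x, y⟩
    obtain ⟨hx, hy, hpt⟩ := posL_cons hp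
    rw [show bw ((x, y) :: t) = (List.replicate x false ++ List.replicate y true) ++ bw t
      from rfl, List.getLast?_append, List.getLast?_append]
    rcases Decidable.em (t = []) with rfl | hT
    · rcases y with _ | y'; · omega
      simp [bw, getLast?_replicate_succ]
    · rw [ih hpt hT]
      rfl

-- Section C2 : cycdesc of block words
lemma desc_bw {bs : List (ℕ × ℕ)} (hp : PosL bs) (hne : bs ≠ []) :
    desc (bw bs) = bs.length - 1 := by
  induction bs with
  | nil => simp at hne
  | cons p t ih =>
    rcases p with ⟨x, y⟩
    obtain ⟨hx, hy, hpt⟩ := posL_cons hp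
    rw [show bw ((x, y) :: t) = List.replicate x false ++ (List.replicate y true ++ bw t) by
      simp [bw], desc_replicate_false_append, desc_replicate_true_append _ _ hy]
    rcases Decidable.em (t = []) with rfl | hT
    · simp [bw]
    · rcases t with _ | ⟨⟨a, b⟩, t'⟩; · simp at hT
      obtain ⟨ha, _, _⟩ := posL_cons hpt
      rw [ih hpt (by simp), head?_bw ha]
      simp

lemma cycdesc_bw {bs : List (ℕ × ℕ)} (hp : PosL bs) (hne : bs ≠ []) :
    cycdesc (bw bs) = bs.length := by
  rcases bs with _ | ⟨⟨x, y⟩, t⟩; · simp at hne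
  obtain ⟨hx, hy, hpt⟩ := posL_cons hp
  unfold cycdesc wrapv
  rw [desc_bw hp hne, getLast?_bw hp hne, head?_bw hx]
  simp

-- bwT
lemma map_not_bw (bs : List (ℕ × ℕ)) : (bw bs).map not = bwT bs := by
  induction bs with
  | nil => rfl
  | cons p t ih =>
    rcases p with ⟨x, y⟩
    show (List.replicate x false ++ List.replicate y true ++ bw t).map not = _
    rw [List.map_append, List.map_append, List.map_replicate, List.map_replicate, ih]
    rfl

lemma desc_replicate_true_append' (x : ℕ) (L : List Bool) :
    desc (List.replicate x true ++ (List.replicate 0 false ++ L)) =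
      desc (List.replicate x true ++ L) := by simp

lemma desc_bwT {bs : List (ℕ × ℕ)} (hp : PosL bs) : desc (bwT bs) = bs.length := by
  induction bs with
  | nil => rfl
  | cons p t ih =>
    rcases p with ⟨x, y⟩
    obtain ⟨hx, hy, hpt⟩ := posL_cons hp
    rw [show bwT ((x, y) :: t) = List.replicate x true ++ (List.replicate y false ++ bwT t) by
      simp [bwT], desc_replicate_true_append _ _ hx, desc_replicate_false_append]
    have hh : (List.replicate y false ++ bwT t).head? = some false := by
      rcases y with _ | y'; · omega
      rw [show List.replicate (y'+1) false ++ bwT t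
        = false :: (List.replicate y' false ++ bwT t) by rw [List.replicate_succ]; rfl]
      rfl
    rw [hh, ih hpt]
    simp [Nat.add_comm]

lemma getLast?_bwT {bs : List (ℕ × ℕ)} (hp : PosL bs) (hne : bs ≠ []) :
    (bwT bs).getLast? = some false := by
  induction bs with
  | nil => simp at hne
  | cons p t ih =>
    rcases p with ⟨x, y⟩
    obtain ⟨hx, hy, hpt⟩ := posL_cons hp
    rw [show bwT ((x, y) :: t) = (List.replicate x true ++ List.replicate y false) ++ bwT t
      from rfl, List.getLast?_append, List.getLast?_append]
    rcases Decidable.em (t = []) with rfl | hT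
    · rcases y with _ | y'; · omega
      simp [bwT, getLast?_replicate_succ]
    · rw [ih hpt hT]
      rfl

lemma cycdesc_bwT {bs : List (ℕ × ℕ)} (hp : PosL bs) : cycdesc (bwT bs) = bs.length := by
  unfold cycdesc wrapv
  rcases Decidable.em (bs = []) with rfl | hne
  · rfl
  · rw [desc_bwT hp, getLast?_bwT hp hne]
    simp

-- Section D : existence of block representation
lemma head_dropWhile_aux (p : Bool → Bool) (w : List Bool) :
    ∀ {a : Bool} {r' : List Bool}, w.dropWhile p = a :: r' → p a = false := by
  induction w with
  | nil => intro a r' h; simp [List.dropWhile] at h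
  | cons b t ih =>
    intro a r' h
    rw [List.dropWhile_cons] at h
    by_cases hb : p b = true
    · rw [if_pos hb] at h; exact ih h
    · rw [if_neg hb] at h
      obtain ⟨rfl, -⟩ := List.cons_eq_cons.1 h.symm
      simpa using hb

lemma parse_aux : ∀ N (w : List Bool), w.length ≤ N → w.head? = some false →
    w.getLast? = some true → ∃ bs, bs ≠ [] ∧ PosL bs ∧ w = bw bs := by
  intro N
  induction N with
  | zero =>
    intro w hw hh _
    rcases w with _ | ⟨a, w'⟩
    · simp at hh
    · simp at hw
  | succ N ih =>
    intro w hw hh hl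
    set t0 := w.takeWhile (fun b => !b) with ht0
    set r := w.dropWhile (fun b => !b) with hr
    have hsplit : t0 ++ r = w := List.takeWhile_append_dropWhile
    have ht0rep : t0 = List.replicate t0.length false := by
      apply List.eq_replicate_of_mem
      intro b hb
      have := List.mem_takeWhile_imp hb
      simpa using this
    have ht0pos : 0 < t0.length := by
      rcases w with _ | ⟨a, w'⟩; · simp at hh
      simp only [List.head?_cons, Option.some_inj] at hh
      subst hh
      rw [ht0]
      simp [List.takeWhile_cons]
    have hrne : r ≠ [] := by
      intro hre
      rw [hre, List.append_nil] at hsplit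
      rw [← hsplit, ht0rep] at hl
      obtain ⟨k, hk⟩ : ∃ k, t0.length = k + 1 := ⟨t0.length - 1, by omega⟩
      rw [hk, getLast?_replicate_succ] at hl
      simp at hl
    have hrhead : r.head? = some true := by
      rcases hre : r with _ | ⟨a, r'⟩; · exact absurd hre hrne
      have h' := head_dropWhile_aux (fun b => !b) w (hr ▸ hre)
      rcases a with _|_
      · simp at h'
      · rfl
    set t1 := r.takeWhile (fun b => b) with ht1
    set r2 := r.dropWhile (fun b => b) with hr2
    have hsplit2 : t1 ++ r2 = r := List.takeWhile_append_dropWhile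
    have ht1rep : t1 = List.replicate t1.length true := by
      apply List.eq_replicate_of_mem
      intro b hb
      have := List.mem_takeWhile_imp hb
      simpa using this
    have ht1pos : 0 < t1.length := by
      rcases hre : r with _ | ⟨a, r'⟩; · exact absurd hre hrne
      rw [hre] at hrhead
      simp only [List.head?_cons, Option.some_inj] at hrhead
      subst hrhead
      rw [ht1, hre]
      simp [List.takeWhile_cons]
    rcases Decidable.em (r2 = []) with hr2e | hr2ne
    · refine ⟨[(t0.length, t1.length)], by simp, ?_, ?_⟩
      · intro p hp; simp at hp; subst hp; exact ⟨ht0pos, ht1pos⟩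
      · rw [show bw [(t0.length, t1.length)]
          = List.replicate t0.length false ++ List.replicate t1.length true ++ [] from rfl]
        rw [List.append_nil, ← ht0rep, ← ht1rep, ← hsplit, ← hsplit2, hr2e, List.append_nil]
    · have hr2head : r2.head? = some false := by
        rcases hr2e : r2 with _ | ⟨a, r2'⟩; · exact absurd hr2e hr2ne
        have h' := head_dropWhile_aux (fun b => b) r (hr2 ▸ hr2e)
        rcases a with _|_
        · rfl
        · simp at h'
      have hr2last : r2.getLast? = some true := by
        rw [← hsplit, ← hsplit2, List.getLast?_append, List.getLast?_append] at hl
        rcases r2l : r2.getLast? with _ | b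
        · rcases r2 with _ | ⟨c, r2''⟩; · exact absurd rfl hr2ne
          rw [List.getLast?_eq_getLast (l := c :: r2'') (by simp)] at r2l
          simp at r2l
        · rw [r2l] at hl; simpa using hl
      have hlen : r2.length ≤ N := by
        have h1 : w.length = t0.length + (t1.length + r2.length) := by
          rw [← hsplit, ← hsplit2, List.length_append, List.length_append]
        omega
      obtain ⟨bs, hbne, hbpos, hbw⟩ := ih r2 hlen hr2head hr2last
      refine ⟨(t0.length, t1.length) :: bs, by simp, ?_, ?_⟩
      · intro p hp
        rcases List.mem_cons.1 hp with rfl | hp'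
        · exact ⟨ht0pos, ht1pos⟩
        · exact hbpos p hp'
      · rw [show bw ((t0.length, t1.length) :: bs)
          = List.replicate t0.length false ++ List.replicate t1.length true ++ bw bs from rfl]
        rw [← hbw, ← ht0rep, ← ht1rep, List.append_assoc, hsplit2, hsplit]

lemma rotate_to_bw {u : List Bool} (h0 : false ∈ u) (h1 : true ∈ u) :
    ∃ bs, bs ≠ [] ∧ PosL bs ∧ u ~r bw bs := by
  obtain ⟨s, t, rfl⟩ := List.append_of_mem h1
  have hrot1 : s ++ true :: t ~r (t ++ s) ++ [true] := by
    apply conj_iff.1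
    refine conj_trans (x := s ++ true :: t) (y := (true :: t) ++ s) ?_ ?_
    · exact ⟨s, true :: t, rfl, rfl⟩
    · exact ⟨[true], t ++ s, by simp, rfl⟩
  set w2 := (t ++ s) ++ [true] with hw2
  have h0' : false ∈ w2 := hrot1.perm.mem_iff.1 h0
  set t2 := w2.takeWhile (fun b => b) with ht2
  set r3 := w2.dropWhile (fun b => b) with hr3
  have hsplit : t2 ++ r3 = w2 := List.takeWhile_append_dropWhile
  have ht2rep : t2 = List.replicate t2.length true := by
    apply List.eq_replicate_of_mem
    intro b hb
    have := List.mem_takeWhile_imp hb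
    simpa using this
  have hr3ne : r3 ≠ [] := by
    intro hre
    rw [hre, List.append_nil] at hsplit
    rw [← hsplit, ht2rep] at h0'
    have := List.eq_of_mem_replicate h0'
    simp at this
  have hr3head : r3.head? = some false := by
    rcases hr3e : r3 with _ | ⟨a, r3'⟩; · exact absurd hr3e hr3ne
    have h' := head_dropWhile_aux (fun b => b) w2 (hr3 ▸ hr3e)
    rcases a with _|_
    · rfl
    · simp at h'
  have hwlast : w2.getLast? = some true := by
    rw [hw2, List.getLast?_append]; rfl
  have hr3last : (r3 ++ List.replicate t2.length true).getLast? = some true := by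
    rcases hk : t2.length with _ | k
    · have ht2e : t2 = [] := List.length_eq_zero_iff.1 hk
      rw [ht2e, List.nil_append] at hsplit
      rw [List.replicate_zero, List.append_nil, hsplit]
      exact hwlast
    · rw [List.getLast?_append, getLast?_replicate_succ]
      rfl
  obtain ⟨bs, hne, hpos, hbw⟩ := parse_aux (r3 ++ List.replicate t2.length true).length
    (r3 ++ List.replicate t2.length true) le_rfl
    (by rw [List.head?_append_of_ne_nil _ hr3ne]; exact hr3head) hr3last
  refine ⟨bs, hne, hpos, ?_⟩
  have hrot2 : w2 ~r r3 ++ List.replicate t2.length true := by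
    apply conj_iff.1
    exact ⟨t2, r3, hsplit.symm, by rw [← ht2rep]⟩
  rw [← hbw]
  exact hrot1.trans hrot2

-- Section E : deleting singleton 1-blocks
def delw : ℕ → List (ℕ × ℕ) → List Bool
  | _, [] => []
  | 0, bs => bw bs
  | m+1, (x, y) :: t =>
    if y = 1 then List.replicate x false ++ delw m t
    else List.replicate x false ++ List.replicate y true ++ delw (m+1) t

def singles (bs : List (ℕ × ℕ)) : ℕ := bs.countP (fun p => p.2 == 1)

lemma delw_sublist (m : ℕ) (bs : List (ℕ × ℕ)) : (delw m bs).Sublist (bw bs) := by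
  induction bs generalizing m with
  | nil => rcases m with _|_ <;> exact List.Sublist.refl _
  | cons p t ih =>
    rcases p with ⟨x, y⟩
    rcases m with _ | m'
    · exact List.Sublist.refl _
    · rw [show bw ((x,y) :: t)
          = List.replicate x false ++ (List.replicate y true ++ bw t) by
        rw [show bw ((x,y) :: t)
          = List.replicate x false ++ List.replicate y true ++ bw t from rfl,
          List.append_assoc]]
      unfold delw
      by_cases hy : y = 1
      · rw [if_pos hy]
        exact (List.Sublist.append_left ((ih m').trans (List.sublist_append_right _ _)) _)
      · rw [if_neg hy, List.append_assoc]
        exact List.Sublist.append_left (List.Sublist.append_left (ih (m'+1)) _) _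

lemma delw_length {m : ℕ} {bs : List (ℕ × ℕ)} (hm : m ≤ singles bs) :
    (delw m bs).length + m = (bw bs).length := by
  induction bs generalizing m with
  | nil =>
    have : singles ([] : List (ℕ × ℕ)) = 0 := rfl
    rw [this] at hm
    interval_cases m
    rfl
  | cons p t ih =>
    rcases p with ⟨x, y⟩
    rcases m with _ | m'
    · rfl
    · have hbw : (bw ((x,y) :: t)).length = x + y + (bw t).length := by
        rw [show bw ((x,y) :: t)
          = List.replicate x false ++ List.replicate y true ++ bw t from rfl]
        simp
        omega
      rw [hbw]
      unfold delw
      by_cases hy : y = 1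
      · rw [if_pos hy]
        have hm' : m' ≤ singles t := by
          have : singles ((x,y) :: t) = singles t + 1 := by
            simp [singles, List.countP_cons, hy]
          omega
        have := ih hm'
        simp only [List.length_append, List.length_replicate] at *
        omega
      · rw [if_neg hy]
        have hm' : m' + 1 ≤ singles t := by
          have : singles ((x,y) :: t) = singles t := by
            simp [singles, List.countP_cons, hy]
          omega
        have := ih hm'
        simp only [List.length_append, List.length_replicate] at *
        omega

lemma delw_shape {bs : List (ℕ × ℕ)} (hp : PosL bs) :
    ∀ {m : ℕ}, m ≤ singles bs → ∃ cs z, PosL cs ∧ cs.length + m = bs.length ∧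
      delw m bs = bw cs ++ List.replicate z false := by
  induction bs with
  | nil =>
    intro m hm
    have : singles ([] : List (ℕ × ℕ)) = 0 := rfl
    rw [this] at hm
    interval_cases m
    exact ⟨[], 0, by intro p hp; simp at hp, by simp, by rfl⟩
  | cons p t ih =>
    rcases p with ⟨x, y⟩
    obtain ⟨hx, hy, hpt⟩ := posL_cons hp
    intro m hm
    rcases m with _ | m'
    · exact ⟨(x, y) :: t, 0, hp, by simp, by simp [delw]⟩
    · unfold delw
      by_cases hy1 : y = 1
      · rw [if_pos hy1]
        have hm' : m' ≤ singles t := by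
          have : singles ((x,y) :: t) = singles t + 1 := by
            simp [singles, List.countP_cons, hy1]
          omega
        obtain ⟨cs, z, hcs, hlen, heq⟩ := ih hpt hm'
        rcases cs with _ | ⟨⟨a, b⟩, cs'⟩
        · refine ⟨[], x + z, by intro p hp; simp at hp, by simp at hlen ⊢; omega, ?_⟩
          rw [heq]
          simp only [show bw ([] : List (ℕ × ℕ)) = [] from rfl, List.nil_append]
          rw [List.replicate_add]
        · obtain ⟨ha, hb, hcs'⟩ := posL_cons hcs
          refine ⟨(x + a, b) :: cs', z, ?_, by simp at hlen ⊢; omega, ?_⟩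
          · intro p hp
            rcases List.mem_cons.1 hp with rfl | hp'
            · exact ⟨by omega, hb⟩
            · exact hcs' p hp'
          · rw [heq]
            simp only [show bw ((a, b) :: cs')
                = List.replicate a false ++ List.replicate b true ++ bw cs' from rfl,
              show bw ((x + a, b) :: cs')
                = List.replicate (x + a) false ++ List.replicate b true ++ bw cs' from rfl,
              List.replicate_add, List.append_assoc]
      · rw [if_neg hy1]
        have hm' : m' + 1 ≤ singles t := by
          have : singles ((x,y) :: t) = singles t := by
            simp [singles, List.countP_cons, hy1]
          omega
        obtain ⟨cs, z, hcs, hlen, heq⟩ := ih hpt hm'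
        refine ⟨(x, y) :: cs, z, ?_, by simp at hlen ⊢; omega, ?_⟩
        · intro p hp
          rcases List.mem_cons.1 hp with rfl | hp'
          · exact ⟨hx, hy⟩
          · exact hcs p hp'
        · rw [heq]
          simp only [show bw ((x, y) :: cs)
              = List.replicate x false ++ List.replicate y true ++ bw cs from rfl,
            List.append_assoc]

lemma singles_lb {bs : List (ℕ × ℕ)} (hp : PosL bs) :
    bs.length + bs.length ≤ singles bs + (bs.map Prod.snd).sum := by
  induction bs with
  | nil => simp [singles]
  | cons p t ih =>
    rcases p with ⟨x, y⟩
    obtain ⟨hx, hy, hpt⟩ := posL_cons hp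
    have := ih hpt
    by_cases hy1 : y = 1
    · have : singles ((x,y) :: t) = singles t + 1 := by
        simp [singles, List.countP_cons, hy1]
      simp only [List.length_cons, List.map_cons, List.sum_cons, this] at *
      omega
    · have h2 : singles ((x,y) :: t) = singles t := by
        simp [singles, List.countP_cons, hy1]
      simp only [List.length_cons, List.map_cons, List.sum_cons, h2] at *
      omega

-- Section F : alternating words
lemma alt_sublist_bw {k : ℕ} {bs : List (ℕ × ℕ)} (hp : PosL bs) (hk : k ≤ bs.length) :
    (bw (List.replicate k (1, 1))).Sublist (bw bs) := by
  induction bs generalizing k with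
  | nil =>
    simp only [List.length_nil, Nat.le_zero] at hk
    subst hk
    exact List.Sublist.refl _
  | cons p t ih =>
    rcases p with ⟨x, y⟩
    obtain ⟨hx, hy, hpt⟩ := posL_cons hp
    rcases k with _ | k'
    · exact List.nil_sublist _
    · rw [List.replicate_succ]
      show (List.replicate 1 false ++ List.replicate 1 true ++ bw (List.replicate k' (1,1))).Sublist
        (List.replicate x false ++ List.replicate y true ++ bw t)
      have h1 : (List.replicate 1 false).Sublist (List.replicate x false) :=
        (List.replicate_sublist_replicate _).2 hx
      have h2 : (List.replicate 1 true).Sublist (List.replicate y true) :=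
        (List.replicate_sublist_replicate _).2 hy
      have h3 := ih hpt (by simpa using hk)
      exact List.Sublist.append (List.Sublist.append h1 h2) h3

lemma posL_replicate_one (k : ℕ) : PosL (List.replicate k (1, 1)) := by
  intro p hp
  have := List.eq_of_mem_replicate hp
  subst this
  exact ⟨one_pos, one_pos⟩

lemma length_bw_replicate_one (k : ℕ) : (bw (List.replicate k (1, 1))).length = 2 * k := by
  rw [length_bw]
  induction k with
  | zero => rfl
  | succ k' ih => rw [List.replicate_succ]; simp at ih ⊢; omega

lemma cycdesc_alt {k : ℕ} (hk : 0 < k) : cycdesc (bw (List.replicate k (1, 1))) = k := by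
  rw [cycdesc_bw (posL_replicate_one k) (by
    intro hh
    have := congrArg List.length hh
    simp at this
    omega)]
  exact List.length_replicate

-- Section G : lCount = cycdesc
lemma desc_eq_countP (w : List Bool) :
    desc w = (List.range (w.length - 1)).countP
      (fun j => (w.getD j false) && !(w.getD (j+1) false)) := by
  induction w with
  | nil => rfl
  | cons a t ih =>
    rcases t with _ | ⟨b, t'⟩
    · simp [desc_cons]
    · rw [desc_cons]
      have hlen : (a :: b :: t').length - 1 = (b :: t').length := rfl
      rw [hlen, show (b :: t').length = (b :: t').length - 1 + 1 by simp,
        List.range_succ_eq_map, List.countP_cons, List.countP_map]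
      have hcomp : ((fun j => ((a :: b :: t').getD j false) &&
            !((a :: b :: t').getD (j+1) false)) ∘ (· + 1))
          = (fun j => ((b :: t').getD j false) && !((b :: t').getD (j+1) false)) := by
        funext j
        rfl
      rw [hcomp, ← ih]
      have h0 : ((a :: b :: t').getD 0 false && !((a :: b :: t').getD 1 false))
          = (a && !b) := rfl
      rw [h0]
      simp only [List.head?_cons]
      rcases a with _|_ <;> rcases b with _|_ <;> simp <;> omega

lemma card_filter_range (n : ℕ) (p : ℕ → Prop) [DecidablePred p] :
    ((Finset.range n).filter p).card = (List.range n).countP (fun i => decide (p i)) := by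
  induction n with
  | zero => rfl
  | succ k ih =>
    rw [Finset.range_add_one, Finset.filter_insert, List.range_succ, List.countP_append]
    by_cases hp : p k
    · rw [if_pos hp, Finset.card_insert_of_notMem (by simp)]
      simp [ih, hp]
    · rw [if_neg hp]
      simp [ih, hp]

lemma lCount_eq_cycdesc (w : List Bool) : lCount w = cycdesc w := by
  rcases w with _ | ⟨a, t⟩
  · have : lCount ([] : List Bool) = 0 := by
      unfold lCount
      convert Set.ncard_empty ℕ
      ext i
      simp
    rw [this]; rfl
  set w := a :: t with hw
  set n := w.length with hn
  have hn1 : 1 ≤ n := by rw [hn, hw]; simp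
  classical
  have hset : {i | i < n ∧ cget w i = false ∧ cget w (i + n - 1) = true}
      = ↑((Finset.range n).filter
        (fun i => cget w i = false ∧ cget w (i + n - 1) = true)) := by
    ext i
    simp [Finset.mem_filter, Finset.mem_range]
    try tauto
  rw [show lCount w = {i | i < n ∧ cget w i = false ∧ cget w (i + n - 1) = true}.ncard
    from rfl, hset, Set.ncard_coe_finset, card_filter_range]
  have hrange : List.range n = 0 :: (List.range (n-1)).map Nat.succ := by
    conv_lhs => rw [show n = n - 1 + 1 by omega]
    rw [List.range_succ_eq_map]
  rw [hrange, List.countP_cons, List.countP_map]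
  have hc0 : cget w 0 = a := by
    show w.getD (0 % w.length) false = a
    rw [Nat.zero_mod]
    rfl
  have hlast : cget w (0 + n - 1) = w.getD (n - 1) false := by
    show w.getD ((0 + n - 1) % w.length) false = _
    rw [Nat.zero_add, ← hn, Nat.mod_eq_of_lt (by omega)]
  have hgl : w.getLast? = some (w.getD (n - 1) false) := by
    rw [List.getLast?_eq_getElem?, List.getD_eq_getElem?_getD, hn]
    have : w.length - 1 < w.length := by omega
    rw [List.getElem?_eq_getElem (by omega)]
    rfl
  have hwrap : (if (fun i => decide (cget w i = false ∧ cget w (i + n - 1) = true)) 0 = true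
      then 1 else 0) = wrapv w := by
    unfold wrapv
    simp only
    rw [hgl, show w.head? = some a from rfl]
    simp only [hc0, hlast]
    rcases a with _|_ <;> rcases hb : w.getD (n-1) false with _|_ <;> simp [hb]
  have hterm : List.countP
      ((fun i => decide (cget w i = false ∧ cget w (i + n - 1) = true)) ∘ Nat.succ)
      (List.range (n - 1)) = desc w := by
    rw [desc_eq_countP]
    apply List.countP_congr
    intro j hj
    rw [List.mem_range] at hj
    simp only [Function.comp_apply]
    have h1 : cget w (Nat.succ j) = w.getD (j+1) false := by
      show w.getD ((j + 1) % w.length) false = _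
      rw [← hn, Nat.mod_eq_of_lt (by rw [hn] at hj ⊢; omega)]
    have h2 : cget w (Nat.succ j + n - 1) = w.getD j false := by
      show w.getD ((j + 1 + n - 1) % w.length) false = _
      rw [← hn, show j + 1 + n - 1 = j + n by omega, Nat.add_mod_right,
        Nat.mod_eq_of_lt (by rw [hn] at hj ⊢; omega)]
    simp only [h1, h2]
    rcases hx : w.getD j false with _|_ <;> rcases hy : w.getD (j+1) false with _|_ <;>
      simp [hx, hy]
  rw [hterm, hwrap]
  unfold cycdesc
  omega

-- Section H : cyclic subword facts
lemma length_filter_count (c : Bool) (u : List Bool) :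
    (u.filter (fun b => b == c)).length = u.count c := by
  induction u with
  | nil => rfl
  | cons a t ih =>
    rw [List.filter_cons, List.count_cons]
    by_cases hac : a = c
    · subst hac; simp [ih]
    · have h1 : (a == c) = false := by
        rcases a with _|_ <;> rcases c with _|_ <;> simp_all
      have h2 : (c == a) = false := by
        rcases a with _|_ <;> rcases c with _|_ <;> simp_all
      rw [h1]
      simp [h2, ih]

lemma cyclicSubword_replicate_iff {j : ℕ} {c : Bool} {u : List Bool} :
    CyclicSubword (List.replicate j c) u ↔ j ≤ u.count c := by
  constructor
  · rintro ⟨s', u', h1, h2, h3⟩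
    have hs' : s' = List.replicate j c := by
      obtain ⟨p, q, hpq, hs⟩ := h1
      have hlen : s'.length = j := by
        have := congrArg List.length hpq
        rw [hs]
        simp at this ⊢
        omega
      rw [← hlen]
      apply List.eq_replicate_of_mem
      intro b hb
      rw [hs] at hb
      have : b ∈ List.replicate j c := by
        rw [hpq]
        rcases List.mem_append.1 hb with h | h
        · exact List.mem_append.2 (Or.inr h)
        · exact List.mem_append.2 (Or.inl h)
      exact List.eq_of_mem_replicate this
    have hcount : (List.replicate j c).count c ≤ u'.count c := by
      rw [← hs']
      exact h3.count_le c
    rw [List.count_replicate] at hcount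
    simp at hcount
    have : u'.count c = u.count c := by
      obtain ⟨p, q, hpq, hu⟩ := h2
      rw [hpq, hu, List.count_append, List.count_append]
      omega
    omega
  · intro hj
    have h1 : (List.replicate j c).Sublist u := by
      have hf : u.filter (fun b => b == c) = List.replicate (u.count c) c := by
        rw [← length_filter_count c u]
        apply List.eq_replicate_of_mem
        intro b hb
        have := List.of_mem_filter hb
        simpa using this
      refine List.Sublist.trans ?_
        ((List.filter_sublist : (u.filter (fun b => b == c)).Sublist u))
      rw [hf]
      exact (List.replicate_sublist_replicate _).2 hj
    exact cyclicSubword_of_sublist h1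

lemma conj_map_not {x y : List Bool} (h : ConjWords x y) :
    ConjWords (x.map not) (y.map not) := by
  obtain ⟨s, t, rfl, rfl⟩ := h
  exact ⟨s.map not, t.map not, by simp, by simp⟩

lemma cyclicSubword_map_not {s w : List Bool} (h : CyclicSubword s w) :
    CyclicSubword (s.map not) (w.map not) := by
  obtain ⟨s', w', h1, h2, h3⟩ := h
  exact ⟨s'.map not, w'.map not, conj_map_not h1, conj_map_not h2, h3.map not⟩

lemma map_not_not (l : List Bool) : (l.map not).map not = l := by
  induction l with
  | nil => rfl
  | cons a t ih => simp [ih]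

lemma cyclicSubword_map_not_iff {s w : List Bool} :
    CyclicSubword (s.map not) (w.map not) ↔ CyclicSubword s w := by
  constructor
  · intro h
    have := cyclicSubword_map_not h
    rwa [map_not_not, map_not_not] at this
  · exact cyclicSubword_map_not

lemma count_map_not (c : Bool) (w : List Bool) : (w.map not).count c = w.count (!c) := by
  induction w with
  | nil => rfl
  | cons a t ih =>
    rcases a with _|_ <;> rcases c with _|_ <;>
      simp [List.count_cons, ih]

-- Section I : main lemmas
lemma len_le_sum_snd {bs : List (ℕ × ℕ)} (hp : PosL bs) :
    bs.length ≤ (bs.map Prod.snd).sum := by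
  induction bs with
  | nil => simp
  | cons p t ih =>
    rcases p with ⟨x, y⟩
    obtain ⟨hx, hy, hpt⟩ := posL_cons hp
    have := ih hpt
    simp only [List.length_cons, List.map_cons, List.sum_cons]
    omega

lemma len_le_sum_fst {bs : List (ℕ × ℕ)} (hp : PosL bs) :
    bs.length ≤ (bs.map Prod.fst).sum := by
  induction bs with
  | nil => simp
  | cons p t ih =>
    rcases p with ⟨x, y⟩
    obtain ⟨hx, hy, hpt⟩ := posL_cons hp
    have := ih hpt
    simp only [List.length_cons, List.map_cons, List.sum_cons]
    omega

lemma key_le {n : ℕ} {u v : List Bool} (hu : u.length = n) (hv : v.length = n)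
    (hu0 : false ∈ u) (hu1 : true ∈ u) (hv0 : false ∈ v) (hv1 : true ∈ v)
    (hcf : u.count false = v.count false) (hct : u.count true = v.count true)
    (hle : u.count true ≤ u.count false)
    (h : ∀ w : List Bool, 4 * w.length ≤ 3 * n + 16 →
      (CyclicSubword w u ↔ CyclicSubword w v)) :
    lCount v ≤ lCount u := by
  obtain ⟨bs, hbne, hbpos, hbrot⟩ := rotate_to_bw hu0 hu1
  obtain ⟨cs, hcne, hcpos, hcrot⟩ := rotate_to_bw hv0 hv1
  set l := bs.length with hl
  set lv := cs.length with hlv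
  have hlu : lCount u = l := by
    rw [lCount_eq_cycdesc, cycdesc_rotated hbrot, cycdesc_bw hbpos hbne]
  have hlcv : lCount v = lv := by
    rw [lCount_eq_cycdesc, cycdesc_rotated hcrot, cycdesc_bw hcpos hcne]
  rw [hlu, hlcv]
  by_contra hcon
  have hlt : l + 1 ≤ lv := by omega
  set c0 := u.count false with hc0
  set c1 := u.count true with hc1
  have hc01 : c0 + c1 = n := by rw [hc0, hc1, List.count_false_add_count_true, hu]
  have hubw : u.count false = (bs.map Prod.fst).sum := by
    rw [hbrot.perm.count_eq, count_bw_false]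
  have hubwt : u.count true = (bs.map Prod.snd).sum := by
    rw [hbrot.perm.count_eq, count_bw_true]
  have hvbw : v.count false = (cs.map Prod.fst).sum := by
    rw [hcrot.perm.count_eq, count_bw_false]
  have hvbwt : v.count true = (cs.map Prod.snd).sum := by
    rw [hcrot.perm.count_eq, count_bw_true]
  have hlc1 : l ≤ c1 := by
    rw [hc1, hubwt]; exact len_le_sum_snd hbpos
  have hlvc1 : lv ≤ c1 := by
    rw [hct, hvbwt]; exact len_le_sum_snd hcpos
  have hlvc0 : lv ≤ c0 := by
    rw [hcf, hvbw]; exact len_le_sum_fst hcpos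
  have hl1 : 1 ≤ l := by
    rcases bs with _|_; · simp at hbne
    simp [hl]
  by_cases h8 : 4 * (2 * (l + 1)) ≤ 3 * n + 16
  · -- the alternating word distinguishes
    set w := bw (List.replicate (l + 1) (1, 1)) with hwdef
    have hwlen : w.length = 2 * (l + 1) := length_bw_replicate_one _
    have hwv : CyclicSubword w v := by
      rw [cyclicSubword_iff]
      exact ⟨w, bw cs, IsRotated.refl w, hcrot,
        alt_sublist_bw hcpos (by omega)⟩
    have hwu : ¬ CyclicSubword w u := by
      intro hc
      rw [cyclicSubword_iff] at hc
      obtain ⟨w', u', h1, h2, h3⟩ := hc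
      have e1 : cycdesc w' = l + 1 := by
        rw [← cycdesc_rotated h1, hwdef, cycdesc_alt (by omega)]
      have e2 : cycdesc u' = l := by
        rw [← cycdesc_rotated h2, cycdesc_rotated hbrot, cycdesc_bw hbpos hbne]
      have := cycdesc_sublist_le h3
      omega
    exact hwu ((h w (by omega)).2 hwv)
  · -- hard case : delete singleton 1-blocks
    have h8' : 3 * n + 9 ≤ 8 * l := by omega
    have hsl : 2 * l ≤ singles bs + c1 := by
      have := singles_lb hbpos
      rw [← hubwt, ← hc1] at this
      omega
    have hc1n : 2 * c1 ≤ n := by omega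
    set m := min (singles bs) (l - 1) with hm
    have hm1 : m ≤ singles bs := min_le_left _ _
    have hm2 : m ≤ l - 1 := min_le_right _ _
    have hbudget : n ≤ 4 * m + 16 := by
      have h1 : n ≤ 4 * singles bs + 16 := by omega
      have h2 : n ≤ 4 * (l - 1) + 16 := by omega
      omega
    set w := delw m bs with hwdef
    have hwu : CyclicSubword w u := by
      rw [cyclicSubword_iff]
      exact ⟨w, bw bs, IsRotated.refl w, hbrot, delw_sublist m bs⟩
    have hbwlen : (bw bs).length = n := by
      rw [← hbrot.perm.length_eq, hu]
    have hwlen : w.length + m = n := by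
      rw [hwdef, delw_length hm1, hbwlen]
    obtain ⟨ds, z, hdpos, hdlen, hdeq⟩ := delw_shape hbpos hm1
    rcases ds with _ | ⟨⟨a, b⟩, ds'⟩
    · simp at hdlen; omega
    obtain ⟨ha, hb, hds'⟩ := posL_cons hdpos
    have hwrot : w ~r bw ((z + a, b) :: ds') := by
      have h1 : ConjWords w (List.replicate z false ++ bw ((a, b) :: ds')) :=
        ⟨bw ((a, b) :: ds'), List.replicate z false, hdeq, rfl⟩
      have h2 : List.replicate z false ++ bw ((a, b) :: ds') = bw ((z + a, b) :: ds') := by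
        simp only [show bw ((a, b) :: ds')
            = List.replicate a false ++ List.replicate b true ++ bw ds' from rfl,
          show bw ((z + a, b) :: ds')
            = List.replicate (z + a) false ++ List.replicate b true ++ bw ds' from rfl,
          List.replicate_add, List.append_assoc]
      rw [← h2]
      exact conj_iff.1 h1
    have hcw : cycdesc w + m = l := by
      rw [cycdesc_rotated hwrot, cycdesc_bw (by
        intro p hp
        rcases List.mem_cons.1 hp with rfl | hp'
        · exact ⟨by omega, hb⟩
        · exact hds' p hp') (by simp)]
      simp only [List.length_cons] at hdlen ⊢
      omega
    have hwv : ¬ CyclicSubword w v := by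
      intro hc
      rw [cyclicSubword_iff] at hc
      obtain ⟨w', v', h1, h2, h3⟩ := hc
      have e1 : cycdesc w' + m = l := by rw [← cycdesc_rotated h1]; exact hcw
      have e2 : cycdesc v' = lv := by
        rw [← cycdesc_rotated h2, cycdesc_rotated hcrot, cycdesc_bw hcpos hcne]
      have e3 : w'.length = w.length := h1.perm.length_eq.symm
      have e4 : v'.length = n := by rw [← h2.perm.length_eq, hv]
      have := cycdesc_sublist_len h3
      omega
    exact hwv ((h w (by omega)).1 hwu)

-- Section J : counts and final assembly
lemma count_not_lt {n : ℕ} {u v : List Bool} (hu : u.length = n) (hv : v.length = n)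
    (h : ∀ w : List Bool, 4 * w.length ≤ 3 * n + 16 →
      (CyclicSubword w u ↔ CyclicSubword w v)) :
    ¬ (u.count false < v.count false) := by
  intro hlt
  set a := u.count false with ha
  set b := v.count false with hb
  have hc1u : a + u.count true = n := by rw [ha, List.count_false_add_count_true, hu]
  have hc1v : b + v.count true = n := by rw [hb, List.count_false_add_count_true, hv]
  have hbn : b ≤ n := by omega
  by_cases hcase : 4 * (a + 1) ≤ 3 * n + 16
  · have hwv : CyclicSubword (List.replicate (a + 1) false) v :=
      cyclicSubword_replicate_iff.2 (by omega)
    have hwu := (h (List.replicate (a + 1) false) (by simp; omega)).2 hwv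
    have := cyclicSubword_replicate_iff.1 hwu
    omega
  · have hwu : CyclicSubword (List.replicate (v.count true + 1) true) u :=
      cyclicSubword_replicate_iff.2 (by omega)
    have hwv := (h (List.replicate (v.count true + 1) true) (by simp; omega)).1 hwu
    have := cyclicSubword_replicate_iff.1 hwv
    omega

lemma lCount_map_not {u : List Bool} (hu0 : false ∈ u) (hu1 : true ∈ u) :
    lCount (u.map not) = lCount u := by
  obtain ⟨bs, hbne, hbpos, hbrot⟩ := rotate_to_bw hu0 hu1
  rw [lCount_eq_cycdesc, lCount_eq_cycdesc, cycdesc_rotated hbrot, cycdesc_bw hbpos hbne,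
    cycdesc_rotated (hbrot.map not), map_not_bw, cycdesc_bwT hbpos]

theorem statement6' (n : ℕ) (hn : 0 < n) (u v : List Bool)
    (hu : u.length = n) (hv : v.length = n)
    (hu0 : false ∈ u) (hu1 : true ∈ u) (hv0 : false ∈ v) (hv1 : true ∈ v)
    (h : ∀ w : List Bool, 4 * w.length ≤ 3 * n + 16 →
      (CyclicSubword w u ↔ CyclicSubword w v)) :
    u.count false = v.count false ∧ u.count true = v.count true ∧ lCount u = lCount v := by
  have hsym : ∀ w : List Bool, 4 * w.length ≤ 3 * n + 16 →
      (CyclicSubword w v ↔ CyclicSubword w u) := fun w hw => (h w hw).symm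
  have hcf : u.count false = v.count false := by
    have h1 := count_not_lt hu hv h
    have h2 := count_not_lt hv hu hsym
    omega
  have hct : u.count true = v.count true := by
    have h1 : u.count false + u.count true = n := by
      rw [List.count_false_add_count_true, hu]
    have h2 : v.count false + v.count true = n := by
      rw [List.count_false_add_count_true, hv]
    omega
  refine ⟨hcf, hct, ?_⟩
  rcases le_total (u.count true) (u.count false) with hle | hle
  · have k1 := key_le hu hv hu0 hu1 hv0 hv1 hcf hct hle h
    have k2 := key_le hv hu hv0 hv1 hu0 hu1 hcf.symm hct.symm (by omega) hsym
    omega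
  · -- negate everything
    set u' := u.map not with hu'
    set v' := v.map not with hv'
    have hu'0 : false ∈ u' := by
      rw [hu']; exact List.mem_map.2 ⟨true, hu1, rfl⟩
    have hu'1 : true ∈ u' := by
      rw [hu']; exact List.mem_map.2 ⟨false, hu0, rfl⟩
    have hv'0 : false ∈ v' := by
      rw [hv']; exact List.mem_map.2 ⟨true, hv1, rfl⟩
    have hv'1 : true ∈ v' := by
      rw [hv']; exact List.mem_map.2 ⟨false, hv0, rfl⟩
    have hul : u'.length = n := by rw [hu']; simpa using hu
    have hvl : v'.length = n := by rw [hv']; simpa using hv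
    have hcfu : u'.count false = u.count true := by
      rw [hu', count_map_not]; rfl
    have hctu : u'.count true = u.count false := by
      rw [hu', count_map_not]; rfl
    have hcfv : v'.count false = v.count true := by
      rw [hv', count_map_not]; rfl
    have hctv : v'.count true = v.count false := by
      rw [hv', count_map_not]; rfl
    have h' : ∀ w : List Bool, 4 * w.length ≤ 3 * n + 16 →
        (CyclicSubword w u' ↔ CyclicSubword w v') := by
      intro w hw
      have hw' : 4 * (w.map not).length ≤ 3 * n + 16 := by simpa using hw
      have := h (w.map not) hw'
      rw [hu', hv']
      constructor
      · intro hc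
        have h2 := cyclicSubword_map_not hc
        rw [map_not_not] at h2
        have h3 := this.1 h2
        have h4 := cyclicSubword_map_not h3
        rwa [map_not_not w] at h4
      · intro hc
        have h2 := cyclicSubword_map_not hc
        rw [map_not_not] at h2
        have h3 := this.2 h2
        have h4 := cyclicSubword_map_not h3
        rwa [map_not_not w] at h4
    have k1 := key_le hul hvl hu'0 hu'1 hv'0 hv'1 (by omega) (by omega) (by omega) h'
    have k2 := key_le hvl hul hv'0 hv'1 hu'0 hu'1 (by omega) (by omega) (by omega)
      (fun w hw => (h' w hw).symm)
    have e1 : lCount u' = lCount u := lCount_map_not hu0 hu1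
    have e2 : lCount v' = lCount v := lCount_map_not hv0 hv1
    omega


end AuxProof

theorem statement6 (n : ℕ) (hn : 0 < n) (u v : List Bool)
    (hu : u.length = n) (hv : v.length = n)
    (hu0 : false ∈ u) (hu1 : true ∈ u) (hv0 : false ∈ v) (hv1 : true ∈ v)
    (h : ∀ w : List Bool, 4 * w.length ≤ 3 * n + 16 →
      (CyclicSubword w u ↔ CyclicSubword w v)) :
    u.count false = v.count false ∧ u.count true = v.count true ∧ lCount u = lCount v := by
  exact statement6' n hn u v hu hv hu0 hu1 hv0 hv1 h
end

section
/- For every binary word u containing at least one 0 and at least one 1, the word (01)^{l_u} is a cyclic subword of u, and (01)^{l_u + 1} is not a cyclic subword of u. -/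
open List

def bdAux : Option Bool → Option Bool → ℕ := fun a b =>
  if a = some true ∧ b = some false then 1 else 0

def dAux : List Bool → ℕ
  | a :: b :: r => bdAux (some a) (some b) + dAux (b :: r)
  | _ => 0

def cycAux (w : List Bool) : ℕ := dAux w + bdAux w.getLast? w.head?

lemma dAux_append : ∀ x y : List Bool, dAux (x ++ y) = dAux x + bdAux x.getLast? y.head? + dAux y := by
  intro x
  induction x with
  | nil => intro y; simp [dAux, bdAux]
  | cons a x ih =>
    intro y
    cases x with
    | nil =>
      cases y with
      | nil => simp [dAux, bdAux]
      | cons b r => simp [dAux, bdAux]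
    | cons b t =>
      have : (a :: b :: t) ++ y = a :: ((b :: t) ++ y) := rfl
      rw [this]
      show bdAux (some a) (some b) + dAux ((b :: t) ++ y) = _
      rw [ih y]
      show _ = (bdAux (some a) (some b) + dAux (b :: t)) + bdAux (a :: b :: t).getLast? y.head? + dAux y
      have hgl : (a :: b :: t).getLast? = (b :: t).getLast? := by
        simp [List.getLast?_cons_cons]
      rw [hgl]; omega

lemma cycAux_conj (s t : List Bool) : cycAux (s ++ t) = cycAux (t ++ s) := by
  rcases eq_or_ne s [] with rfl | hs
  · simp
  rcases eq_or_ne t [] with rfl | ht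
  · simp
  unfold cycAux
  rw [dAux_append, dAux_append]
  rw [List.getLast?_append_of_ne_nil s ht, List.getLast?_append_of_ne_nil t hs]
  rw [List.head?_append_of_ne_nil s hs, List.head?_append_of_ne_nil t ht]
  omega

lemma cycAux_conjwords {x y : List Bool} (h : ConjWords x y) : cycAux x = cycAux y := by
  obtain ⟨s, t, rfl, rfl⟩ := h; exact cycAux_conj s t

lemma dAux_cons_le {s w : List Bool} (h : s.Sublist w) : ∀ a, dAux (a :: s) ≤ dAux (a :: w) := by
  induction h with
  | slnil => intro a; exact le_refl _
  | cons b h ih =>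
    intro a
    rename_i l₁ l₂
    calc dAux (a :: l₁) ≤ dAux (a :: l₂) := ih a
    _ ≤ dAux (a :: b :: l₂) := by
        cases l₂ with
        | nil => cases a <;> cases b <;> simp [dAux, bdAux]
        | cons c m =>
          show bdAux (some a) (some c) + dAux (c :: m) ≤
            bdAux (some a) (some b) + (bdAux (some b) (some c) + dAux (c :: m))
          cases a <;> cases b <;> cases c <;> simp [bdAux] <;> omega
  | cons_cons b h ih =>
    intro a
    show bdAux (some a) (some b) + dAux (b :: _) ≤ bdAux (some a) (some b) + dAux (b :: _)
    exact Nat.add_le_add_left (ih b) _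

lemma dAux_le {s w : List Bool} (h : s.Sublist w) : dAux s ≤ dAux w := by
  have h1 : dAux (false :: s) ≤ dAux (false :: w) := dAux_cons_le h false
  have e : ∀ v : List Bool, dAux (false :: v) = dAux v := by
    intro v; cases v with
    | nil => simp [dAux]
    | cons b r => show bdAux (some false) (some b) + _ = _ ; simp [bdAux]
  rwa [e, e] at h1

lemma listPow_succ (z : List Bool) (k : ℕ) : listPow z (k + 1) = z ++ listPow z k := by
  simp [listPow, List.replicate_succ]

lemma listPow_succ' (z : List Bool) (k : ℕ) : listPow z (k + 1) = listPow z k ++ z := by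
  simp [listPow, List.replicate_succ']

lemma sublist_listPow {s w : List Bool} (h : s.Sublist w) (k : ℕ) :
    (listPow s k).Sublist (listPow w k) := by
  induction k with
  | zero => simp [listPow]
  | succ k ih => rw [listPow_succ, listPow_succ]; exact h.append ih

lemma dAux_listPow {z : List Bool} (hz : z ≠ []) (k : ℕ) :
    dAux (listPow z (k + 1)) = dAux z + k * cycAux z := by
  induction k with
  | zero => simp [listPow_succ, listPow]
  | succ k ih =>
    rw [listPow_succ, dAux_append, ih]
    have hh : (listPow z (k + 1)).head? = z.head? := by
      rw [listPow_succ, List.head?_append_of_ne_nil z hz]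
    rw [hh]
    unfold cycAux
    ring

lemma cycAux_le_of_sublist {s w : List Bool} (h : s.Sublist w) (hs : s ≠ []) :
    cycAux s ≤ cycAux w := by
  have hw : w ≠ [] := by
    rintro rfl; exact hs (List.sublist_nil.mp h)
  by_contra hlt
  push_neg at hlt
  set k := dAux w + 1 with hk
  have hp := dAux_le (sublist_listPow h (k + 1))
  rw [dAux_listPow hs, dAux_listPow hw] at hp
  have h4 : k * (cycAux w + 1) ≤ k * cycAux s := Nat.mul_le_mul_left k hlt
  rw [Nat.mul_add, Nat.mul_one] at h4
  linarith

def tSum (w : List Bool) : ℕ :=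
  ∑ i ∈ Finset.range (w.length - 1),
    if (w.getD (i+1) false = false ∧ w.getD i false = true) then 1 else 0

lemma tSum_eq_dAux : ∀ w : List Bool, tSum w = dAux w := by
  intro w
  induction w with
  | nil => simp [tSum, dAux]
  | cons a t ih =>
    cases t with
    | nil => simp [tSum, dAux]
    | cons b r =>
      have hlen : (a :: b :: r).length - 1 = r.length + 1 := by simp
      unfold tSum
      rw [hlen, Finset.sum_range_succ']
      have h0 : (if ((a :: b :: r).getD (0+1) false = false ∧ (a :: b :: r).getD 0 false = true)
          then 1 else 0) = bdAux (some a) (some b) := by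
        simp only [List.getD_cons_succ, List.getD_cons_zero, bdAux]
        by_cases h : a = true ∧ b = false
        · rw [if_pos ⟨h.2, h.1⟩, if_pos (by simp [h.1, h.2])]
        · rw [if_neg (by tauto), if_neg (by rintro ⟨h1, h2⟩; simp at h1 h2; tauto)]
      rw [h0]
      have hstep : ∀ i, (if ((a :: b :: r).getD (i+1+1) false = false ∧
            (a :: b :: r).getD (i+1) false = true) then 1 else 0)
          = (if ((b :: r).getD (i+1) false = false ∧ (b :: r).getD i false = true)
            then 1 else 0) := by
        intro i; simp [List.getD_cons_succ]
      simp only [hstep]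
      have : ∑ i ∈ Finset.range r.length,
          (if ((b :: r).getD (i+1) false = false ∧ (b :: r).getD i false = true)
            then (1:ℕ) else 0) = tSum (b :: r) := by
        unfold tSum; simp
      rw [this, ih]
      show dAux (b :: r) + bdAux (some a) (some b) = bdAux (some a) (some b) + dAux (b :: r)
      omega

lemma lCount_eq_cycAux {w : List Bool} (hw : w ≠ []) : lCount w = cycAux w := by
  obtain ⟨a, t, rfl⟩ : ∃ a t, w = a :: t := by
    cases w with
    | nil => exact absurd rfl hw
    | cons a t => exact ⟨a, t, rfl⟩
  have hn : (a :: t).length = t.length + 1 := by simp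
  have hset : {i | i < (a :: t).length ∧ cget (a :: t) i = false ∧
      cget (a :: t) (i + (a :: t).length - 1) = true} =
      ↑((Finset.range (a :: t).length).filter fun i => cget (a :: t) i = false ∧
        cget (a :: t) (i + (a :: t).length - 1) = true) := by
    ext i; simp [Finset.mem_filter, and_assoc]
  rw [lCount, hset, Set.ncard_coe_finset, Finset.card_filter, hn,
    Finset.sum_range_succ']
  have hf0 : (if (cget (a :: t) 0 = false ∧
      cget (a :: t) (0 + (t.length + 1) - 1) = true) then (1:ℕ) else 0) =
      bdAux (a :: t).getLast? (a :: t).head? := by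
    have h1 : cget (a :: t) 0 = a := by
      simp [cget]
    have h2 : cget (a :: t) (0 + (t.length + 1) - 1) = (a :: t).getLast (by simp) := by
      have : (0 + (t.length + 1) - 1) = t.length := by omega
      rw [this]
      unfold cget
      rw [hn, Nat.mod_eq_of_lt (by omega)]
      rw [List.getD_eq_getElem _ _ (by simp), List.getLast_eq_getElem]
      simp
    rw [h1, h2, List.head?_cons, List.getLast?_eq_getLast (l := a :: t) (by simp), bdAux]
    by_cases h : a = false ∧ (a :: t).getLast (by simp) = true
    · rw [if_pos h, if_pos ⟨by rw [h.2], by rw [h.1]⟩]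
    · rw [if_neg h, if_neg (by rintro ⟨h1, h2⟩; simp at h1 h2; tauto)]
  rw [hf0]
  have hstep : ∀ i ∈ Finset.range t.length,
      (if (cget (a :: t) (i + 1) = false ∧
        cget (a :: t) (i + 1 + (t.length + 1) - 1) = true) then (1:ℕ) else 0) =
      (if ((a :: t).getD (i+1) false = false ∧ (a :: t).getD i false = true)
        then (1:ℕ) else 0) := by
    intro i hi
    rw [Finset.mem_range] at hi
    have e1 : cget (a :: t) (i + 1) = (a :: t).getD (i+1) false := by
      unfold cget; rw [hn, Nat.mod_eq_of_lt (by omega)]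
    have e2 : cget (a :: t) (i + 1 + (t.length + 1) - 1) = (a :: t).getD i false := by
      have : i + 1 + (t.length + 1) - 1 = i + (t.length + 1) := by omega
      unfold cget
      rw [this, hn, Nat.add_mod_right, Nat.mod_eq_of_lt (by omega)]
    rw [e1, e2]
  rw [Finset.sum_congr rfl hstep]
  have : ∑ i ∈ Finset.range t.length,
      (if ((a :: t).getD (i+1) false = false ∧ (a :: t).getD i false = true)
        then (1:ℕ) else 0) = tSum (a :: t) := by
    unfold tSum; rw [hn, Nat.add_sub_cancel]
  rw [this, tSum_eq_dAux, cycAux]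

lemma listPow_tf_succ (k : ℕ) :
    listPow [true, false] (k + 1) = true :: false :: listPow [true, false] k := by
  rw [listPow_succ]; rfl

lemma listPow_ft_succ (k : ℕ) :
    listPow [false, true] (k + 1) = false :: true :: listPow [false, true] k := by
  rw [listPow_succ]; rfl

lemma sublist_drop_head {xs r : List Bool} (h : (true :: xs).Sublist (false :: r)) :
    (true :: xs).Sublist r := by
  cases h with
  | cons _ h => exact h

lemma lemG : ∀ w : List Bool, (listPow [true, false] (dAux w)).Sublist w := by
  intro w
  induction w with
  | nil => simp [dAux, listPow]
  | cons a t ih =>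
    cases t with
    | nil => simp [dAux, listPow]
    | cons b r =>
      show (listPow [true, false] (bdAux (some a) (some b) + dAux (b :: r))).Sublist _
      by_cases h : a = true ∧ b = false
      · obtain ⟨rfl, rfl⟩ := h
        have hbd : bdAux (some true) (some false) = 1 := rfl
        rw [hbd, Nat.add_comm, listPow_tf_succ]
        cases hd : dAux (false :: r) with
        | zero =>
          exact ((List.nil_sublist r).cons₂ false).cons₂ true
        | succ k =>
          have ih' := ih
          rw [hd, listPow_tf_succ] at ih'
          have h2 := sublist_drop_head ih'
          rw [← listPow_tf_succ] at h2
          exact (h2.cons₂ false).cons₂ true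
      · have hbd : bdAux (some a) (some b) = 0 := by
          unfold bdAux; rw [if_neg (by rintro ⟨h1, h2⟩; simp at h1 h2; exact h ⟨h1, h2⟩)]
        rw [hbd, Nat.zero_add]
        exact ih.trans (List.sublist_cons_self a (b :: r))

lemma lemH (k : ℕ) :
    listPow [false, true] k ++ [false] = false :: listPow [true, false] k := by
  induction k with
  | zero => rfl
  | succ k ih =>
    rw [listPow_ft_succ, listPow_tf_succ]
    simp only [List.cons_append, ih]

lemma conj_ft_tf (k : ℕ) :
    ConjWords (listPow [false, true] k) (listPow [true, false] k) := by
  cases k with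
  | zero => exact ⟨[], [], rfl, rfl⟩
  | succ k =>
    refine ⟨[false], true :: listPow [false, true] k, ?_, ?_⟩
    · rw [listPow_ft_succ]; rfl
    · rw [listPow_tf_succ, List.cons_append, lemH]

lemma cycAux_ft (k : ℕ) : cycAux (listPow [false, true] (k + 1)) = k + 1 := by
  have hd2 : dAux [false, true] = 0 := rfl
  have hc2 : cycAux [false, true] = 1 := rfl
  have hd : dAux (listPow [false, true] (k + 1)) = k := by
    rw [dAux_listPow (by simp) k, hd2, hc2]; omega
  have hh : (listPow [false, true] (k + 1)).head? = some false := by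
    rw [listPow_ft_succ]; rfl
  have hl : (listPow [false, true] (k + 1)).getLast? = some true := by
    rw [listPow_succ']
    rw [List.getLast?_append_of_ne_nil _ (by simp : [false, true] ≠ [])]
    rfl
  rw [cycAux, hd, hh, hl]
  rfl

theorem statement17 (u : List Bool) (hu0 : false ∈ u) (hu1 : true ∈ u) :
    CyclicSubword (listPow [false, true] (lCount u)) u ∧
    ¬ CyclicSubword (listPow [false, true] (lCount u + 1)) u := by
  have hne : u ≠ [] := List.ne_nil_of_mem hu1
  have hl : lCount u = cycAux u := lCount_eq_cycAux hne
  constructor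
  · obtain ⟨s, t, hst⟩ := List.append_of_mem hu1
    refine ⟨listPow [true, false] (lCount u), true :: (t ++ s), conj_ft_tf _,
      ⟨s, true :: t, hst, by rw [List.cons_append]⟩, ?_⟩
    have hc : cycAux (true :: (t ++ s)) = cycAux u := by
      have h := cycAux_conj s (true :: t)
      rw [← hst, List.cons_append] at h
      exact h.symm
    have hdu : dAux (true :: (t ++ s)) = cycAux (true :: (t ++ s)) := by
      unfold cycAux
      have h1 : (true :: (t ++ s)).head? = some true := rfl
      rw [h1]
      have h2 : bdAux ((true :: (t ++ s)).getLast?) (some true) = 0 := by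
        unfold bdAux
        rw [if_neg (by rintro ⟨-, h⟩; simp at h)]
      rw [h2, Nat.add_zero]
    rw [hl, ← hc, ← hdu]
    exact lemG _
  · rintro ⟨s', w', hcs, hcw, hsub⟩
    have h1 : cycAux s' = lCount u + 1 := by
      rw [← cycAux_conjwords hcs, cycAux_ft]
    have hs'ne : s' ≠ [] := by
      rintro rfl
      have : cycAux ([] : List Bool) = 0 := rfl
      omega
    have h2 : cycAux w' = cycAux u := (cycAux_conjwords hcw).symm
    have h3 := cycAux_le_of_sublist hsub hs'ne
    omega
end
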